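/- arXiv:2007.11143 — 11 statements merged into one kernel-verified Lean document; each statement's English description precedes it below -/
import Mathlib

section
/- Let δ ≥ 0, K ≥ 0, ε > 0, M ≥ 1. There exists a constant A ≥ 1 depending only on δ, K, ε, M such that the following holds. Let X be a geodesic metric space in which geodesic triangles are δ-thin, let γ₀ : [0,∞) → X be a geodesic ray with Busemann function b, suppose X satisfies the interior K-rough-starlikeness condition with respect to γ₀, and suppose ρ_ε is admissible with constant M. Then for every geodesic η : [t₋, t₊] → X with η(t₋) = x and η(t₊) = y one has: (i) ∫_{t₋}^{t₊} ρ_ε(η(t)) dt ≤ A·d_ε(x,y), and (ii) for every s ∈ [t₋, t₊], min{∫_{t₋}^{s} ρ_ε(η(t)) dt, ∫_{s}^{t₊} ρ_ε(η(t)) dt} ≤ A·ε⁻¹·ρ_ε(η(s)). (These are the two uniformity estimates for geodesics in the uniformized space X_ε, with the distance from η(s) to the boundary of X_ε replaced by the comparable quantity ε⁻¹ρ_ε(η(s)).) -/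
open Filter MeasureTheory Set

/-- `g` restricted to `s ⊆ ℝ` is an isometric (geodesic) parametrization. -/
def IsGeodesicOn {X : Type*} [MetricSpace X] (g : ℝ → X) (s : Set ℝ) : Prop :=
  ∀ u ∈ s, ∀ v ∈ s, dist (g u) (g v) = |u - v|

/-- A geodesic from `x` to `y`, parametrized by arclength on `[0, dist x y]`. -/
def GeodesicFromTo {X : Type*} [MetricSpace X] (g : ℝ → X) (x y : X) : Prop :=
  IsGeodesicOn g (Set.Icc 0 (dist x y)) ∧ g 0 = x ∧ g (dist x y) = y

/-- `X` is a geodesic metric space: every pair of points is joined by a geodesic. -/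
def GeodesicSpace (X : Type*) [MetricSpace X] : Prop :=
  ∀ x y : X, ∃ g : ℝ → X, GeodesicFromTo g x y

/-- The Gromov product `(x|y)_p` of `x` and `y` with basepoint `p`. -/
noncomputable def gromov {X : Type*} [MetricSpace X] (p x y : X) : ℝ :=
  (dist x p + dist y p - dist x y) / 2

/-- Geodesic triangles in `X` are `δ`-thin: each side is within distance `δ` of the
union of the other two sides. -/
def ThinTriangles (X : Type*) [MetricSpace X] (δ : ℝ) : Prop :=
  ∀ x y z : X, ∀ g₁ g₂ g₃ : ℝ → X,
    GeodesicFromTo g₁ x y → GeodesicFromTo g₂ x z → GeodesicFromTo g₃ y z →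
    (∀ t ∈ Set.Icc (0:ℝ) (dist x y),
      ∃ p ∈ g₂ '' Set.Icc (0:ℝ) (dist x z) ∪ g₃ '' Set.Icc (0:ℝ) (dist y z),
        dist (g₁ t) p ≤ δ) ∧
    (∀ t ∈ Set.Icc (0:ℝ) (dist x z),
      ∃ p ∈ g₁ '' Set.Icc (0:ℝ) (dist x y) ∪ g₃ '' Set.Icc (0:ℝ) (dist y z),
        dist (g₂ t) p ≤ δ) ∧
    (∀ t ∈ Set.Icc (0:ℝ) (dist y z),
      ∃ p ∈ g₁ '' Set.Icc (0:ℝ) (dist x y) ∪ g₂ '' Set.Icc (0:ℝ) (dist x z),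
        dist (g₃ t) p ≤ δ)

/-- The conformal distance associated to a density `ρ`: the infimum of `ρ`-lengths of
1-Lipschitz curves `c : [0,L] → X` from `x` to `y`. -/
noncomputable def confDist {X : Type*} [MetricSpace X] (ρ : X → ℝ) (x y : X) : ℝ :=
  sInf {ℓ : ℝ | ∃ L : ℝ, 0 ≤ L ∧ ∃ c : ℝ → X, LipschitzOnWith 1 c (Set.Icc 0 L) ∧
    c 0 = x ∧ c L = y ∧ ℓ = ∫ u in (0:ℝ)..L, ρ (c u)}

/-- The density `ρ` is admissible with constant `M`: every geodesic has `ρ`-length at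
most `M` times the conformal distance between its endpoints. -/
def Admissible {X : Type*} [MetricSpace X] (ρ : X → ℝ) (M : ℝ) : Prop :=
  ∀ x y : X, ∀ g : ℝ → X, GeodesicFromTo g x y →
    (∫ u in (0:ℝ)..(dist x y), ρ (g u)) ≤ M * confDist ρ x y

/-- Interior `K`-rough-starlikeness with respect to the ray `γ₀`: every point of `X` is
within distance `K` of a geodesic line that is backward-asymptotic to the boundary
point of `γ₀`. -/
def RoughStarlikeInt {X : Type*} [MetricSpace X] (γ₀ : ℝ → X) (K : ℝ) : Prop :=
  ∀ x : X, ∃ σ : ℝ → X, IsGeodesicOn σ Set.univ ∧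
    Metric.infDist x (Set.range σ) ≤ K ∧
    Tendsto (fun n : ℕ => gromov (σ 0) (σ (-(n : ℝ))) (γ₀ (n : ℝ))) atTop atTop

namespace Stmt0Aux

lemma busemann_lip {X : Type*} [MetricSpace X] {γ₀ : ℝ → X} {b : X → ℝ}
    (hb : ∀ x : X, Tendsto (fun t : ℝ => dist (γ₀ t) x - t) atTop (nhds (b x)))
    (p q : X) : b p ≤ b q + dist p q := by
  refine le_of_tendsto_of_tendsto' (hb p) ((hb q).add_const (dist p q)) ?_
  intro t
  have h := dist_triangle (γ₀ t) q p
  have h2 := dist_comm q p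
  linarith

lemma busemann_le {X : Type*} [MetricSpace X] {γ₀ : ℝ → X} {b : X → ℝ}
    (hγ : IsGeodesicOn γ₀ (Set.Ici 0))
    (hb : ∀ x : X, Tendsto (fun t : ℝ => dist (γ₀ t) x - t) atTop (nhds (b x)))
    (p : X) {T : ℝ} (hT : 0 ≤ T) : b p ≤ dist p (γ₀ T) - T := by
  refine le_of_tendsto (hb p) ?_
  filter_upwards [eventually_ge_atTop T] with t ht
  have h1 : dist (γ₀ t) (γ₀ T) = |t - T| := hγ t (Set.mem_Ici.mpr (le_trans hT ht)) T hT
  rw [abs_of_nonneg (by linarith)] at h1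
  have h2 := dist_triangle (γ₀ t) (γ₀ T) p
  have h3 := dist_comm (γ₀ T) p
  linarith

lemma freq_le_limit {a : ℕ → ℝ} {L c : ℝ} (ha : Tendsto a atTop (nhds L))
    (h : ∃ᶠ n in atTop, c ≤ a n) : c ≤ L := by
  by_contra hc
  push_neg at hc
  have hev : ∀ᶠ n in atTop, a n < c := ha.eventually_lt_const hc
  obtain ⟨n, h1, h2⟩ := (h.and_eventually hev).exists
  linarith

lemma key {X : Type*} [MetricSpace X] {δ : ℝ} {γ₀ : ℝ → X} {b : X → ℝ}
    (hgeo : GeodesicSpace X) (hthin : ThinTriangles X δ)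
    (hγ : IsGeodesicOn γ₀ (Set.Ici 0))
    (hb : ∀ x : X, Tendsto (fun t : ℝ => dist (γ₀ t) x - t) atTop (nhds (b x)))
    {x y : X} {g₁ : ℝ → X} (hg₁ : GeodesicFromTo g₁ x y)
    {t : ℝ} (ht : t ∈ Set.Icc 0 (dist x y)) :
    b (g₁ t) ≤ b x - dist x (g₁ t) + 2*δ ∨ b (g₁ t) ≤ b y - dist y (g₁ t) + 2*δ := by
  set z := g₁ t with hz
  have main : ∀ n : ℕ, (b z ≤ (dist (γ₀ (n:ℝ)) x - n) - dist x z + 2*δ) ∨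
      (b z ≤ (dist (γ₀ (n:ℝ)) y - n) - dist y z + 2*δ) := by
    intro n
    obtain ⟨g₂, hg₂⟩ := hgeo x (γ₀ (n:ℝ))
    obtain ⟨g₃, hg₃⟩ := hgeo y (γ₀ (n:ℝ))
    obtain ⟨p, hp, hdp⟩ := (hthin x y (γ₀ (n:ℝ)) g₁ g₂ g₃ hg₁ hg₂ hg₃).1 t ht
    have hn : (0:ℝ) ≤ n := Nat.cast_nonneg n
    rcases hp with hp | hp
    · left
      obtain ⟨u, hu, rfl⟩ := hp
      obtain ⟨hI, h0, hD⟩ := hg₂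
      have hxu : dist x (g₂ u) = u := by
        have h := hI 0 ⟨le_refl _, dist_nonneg⟩ u hu
        rw [h0] at h
        rw [h, abs_of_nonpos (by linarith [hu.1])]
        ring
      have hud : dist (g₂ u) (γ₀ (n:ℝ)) = dist x (γ₀ (n:ℝ)) - u := by
        have h := hI u hu (dist x (γ₀ (n:ℝ))) ⟨dist_nonneg, le_refl _⟩
        rw [hD] at h
        rw [h, abs_of_nonpos (by linarith [hu.2])]
        ring
      have hbu : b (g₂ u) ≤ dist (g₂ u) (γ₀ (n:ℝ)) - n := busemann_le hγ hb _ hn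
      have hbz : b z ≤ b (g₂ u) + dist z (g₂ u) := busemann_lip hb z (g₂ u)
      have hxz : dist x z ≤ dist x (g₂ u) + dist (g₂ u) z := dist_triangle _ _ _
      have hc1 : dist z (g₂ u) ≤ δ := hdp
      have hc2 : dist (g₂ u) z ≤ δ := by rw [dist_comm]; exact hdp
      have hcm := dist_comm (γ₀ (n:ℝ)) x
      linarith
    · right
      obtain ⟨u, hu, rfl⟩ := hp
      obtain ⟨hI, h0, hD⟩ := hg₃
      have hxu : dist y (g₃ u) = u := by
        have h := hI 0 ⟨le_refl _, dist_nonneg⟩ u hu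
        rw [h0] at h
        rw [h, abs_of_nonpos (by linarith [hu.1])]
        ring
      have hud : dist (g₃ u) (γ₀ (n:ℝ)) = dist y (γ₀ (n:ℝ)) - u := by
        have h := hI u hu (dist y (γ₀ (n:ℝ))) ⟨dist_nonneg, le_refl _⟩
        rw [hD] at h
        rw [h, abs_of_nonpos (by linarith [hu.2])]
        ring
      have hbu : b (g₃ u) ≤ dist (g₃ u) (γ₀ (n:ℝ)) - n := busemann_le hγ hb _ hn
      have hbz : b z ≤ b (g₃ u) + dist z (g₃ u) := busemann_lip hb z (g₃ u)
      have hxz : dist y z ≤ dist y (g₃ u) + dist (g₃ u) z := dist_triangle _ _ _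
      have hc1 : dist z (g₃ u) ≤ δ := hdp
      have hc2 : dist (g₃ u) z ≤ δ := by rw [dist_comm]; exact hdp
      have hcm := dist_comm (γ₀ (n:ℝ)) y
      linarith
  have hfreq := frequently_or_distrib.mp (Frequently.of_forall (f := atTop) main)
  have hnat : Tendsto (fun n : ℕ => (n:ℝ)) atTop atTop := tendsto_natCast_atTop_atTop
  rcases hfreq with hf | hf
  · left
    have hlim : Tendsto (fun n : ℕ => dist (γ₀ (n:ℝ)) x - (n:ℝ)) atTop (nhds (b x)) :=
      (hb x).comp hnat
    have := freq_le_limit (c := b z + dist x z - 2*δ) hlim (hf.mono fun n hn => by linarith)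
    linarith
  · right
    have hlim : Tendsto (fun n : ℕ => dist (γ₀ (n:ℝ)) y - (n:ℝ)) atTop (nhds (b y)) :=
      (hb y).comp hnat
    have := freq_le_limit (c := b z + dist y z - 2*δ) hlim (hf.mono fun n hn => by linarith)
    linarith

lemma integral_exp_linear {c d a b' : ℝ} (hc : c ≠ 0) :
    ∫ t in a..b', Real.exp (c*t + d) =
      c⁻¹ * (Real.exp (c*b' + d) - Real.exp (c*a + d)) := by
  rw [intervalIntegral.integral_comp_mul_add Real.exp hc d, integral_exp, smul_eq_mul]

lemma int_le_left {ε : ℝ} (hε : 0 < ε) {φ : ℝ → ℝ} {a b' B : ℝ} (hab : a ≤ b')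
    (hφ : ContinuousOn φ (Set.Icc a b'))
    (hlow : ∀ t ∈ Set.Icc a b', B - (t - a) ≤ φ t) :
    ∫ t in a..b', Real.exp (-ε * φ t) ≤ ε⁻¹ * Real.exp (-ε * (B - (b' - a))) := by
  have h1 : ∫ t in a..b', Real.exp (-ε * φ t)
      ≤ ∫ t in a..b', Real.exp (ε * t + (-ε*B - ε*a)) := by
    refine intervalIntegral.integral_mono_on hab ?_ ?_ ?_
    · apply ContinuousOn.intervalIntegrable
      rw [Set.uIcc_of_le hab]
      exact Real.continuous_exp.comp_continuousOn (continuousOn_const.mul hφ)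
    · exact (Real.continuous_exp.comp (by continuity)).intervalIntegrable _ _
    · intro t ht
      apply Real.exp_le_exp.mpr
      have h := mul_le_mul_of_nonneg_left (hlow t ht) hε.le
      nlinarith
  rw [integral_exp_linear hε.ne'] at h1
  have h2 : Real.exp (ε*b' + (-ε*B - ε*a)) = Real.exp (-ε * (B - (b' - a))) := by
    congr 1; ring
  have h3 := (Real.exp_pos (ε*a + (-ε*B - ε*a))).le
  have h4 : (0:ℝ) ≤ ε⁻¹ := inv_nonneg.mpr hε.le
  rw [h2] at h1
  nlinarith [mul_nonneg h4 h3]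

lemma int_le_right {ε : ℝ} (hε : 0 < ε) {φ : ℝ → ℝ} {a b' B : ℝ} (hab : a ≤ b')
    (hφ : ContinuousOn φ (Set.Icc a b'))
    (hlow : ∀ t ∈ Set.Icc a b', B - (b' - t) ≤ φ t) :
    ∫ t in a..b', Real.exp (-ε * φ t) ≤ ε⁻¹ * Real.exp (-ε * (B - (b' - a))) := by
  have h1 : ∫ t in a..b', Real.exp (-ε * φ t)
      ≤ ∫ t in a..b', Real.exp ((-ε) * t + (ε*b' - ε*B)) := by
    refine intervalIntegral.integral_mono_on hab ?_ ?_ ?_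
    · apply ContinuousOn.intervalIntegrable
      rw [Set.uIcc_of_le hab]
      exact Real.continuous_exp.comp_continuousOn (continuousOn_const.mul hφ)
    · exact (Real.continuous_exp.comp (by continuity)).intervalIntegrable _ _
    · intro t ht
      apply Real.exp_le_exp.mpr
      have h := mul_le_mul_of_nonneg_left (hlow t ht) hε.le
      nlinarith
  rw [integral_exp_linear (by linarith : (-ε) ≠ 0)] at h1
  have h2 : Real.exp ((-ε)*a + (ε*b' - ε*B)) = Real.exp (-ε * (B - (b' - a))) := by
    congr 1; ring
  have h3 := (Real.exp_pos ((-ε)*b' + (ε*b' - ε*B))).le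
  have h4 : (0:ℝ) ≤ ε⁻¹ := inv_nonneg.mpr hε.le
  have h5 : (-ε)⁻¹ = -(ε⁻¹) := by rw [neg_inv]
  rw [h2, h5] at h1
  nlinarith [mul_nonneg h4 h3]

lemma confDist_nonneg' {X : Type*} [MetricSpace X] {ρ : X → ℝ} (hρ : ∀ z, 0 ≤ ρ z)
    (x y : X) : 0 ≤ confDist ρ x y := by
  apply Real.sInf_nonneg
  rintro ℓ ⟨L, hL, c, hc, h0, hL', rfl⟩
  exact intervalIntegral.integral_nonneg hL fun u _ => hρ _

end Stmt0Aux


open Stmt0Aux in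
/-- Theorem (uniformity estimates for geodesics in the uniformized space `X_ε`). -/
theorem statement0 (δ K ε M : ℝ) (hδ : 0 ≤ δ) (hK : 0 ≤ K) (hε : 0 < ε) (hM : 1 ≤ M) :
    ∃ A : ℝ, 1 ≤ A ∧
      ∀ (X : Type) [MetricSpace X] (γ₀ : ℝ → X) (b : X → ℝ),
        GeodesicSpace X →
        ThinTriangles X δ →
        IsGeodesicOn γ₀ (Set.Ici 0) →
        (∀ x : X, Tendsto (fun t : ℝ => dist (γ₀ t) x - t) atTop (nhds (b x))) →
        RoughStarlikeInt γ₀ K →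
        Admissible (fun z => Real.exp (-ε * b z)) M →
        ∀ (x y : X) (η : ℝ → X) (t₁ t₂ : ℝ), t₁ ≤ t₂ →
          IsGeodesicOn η (Set.Icc t₁ t₂) → η t₁ = x → η t₂ = y →
          (∫ t in t₁..t₂, Real.exp (-ε * b (η t))) ≤
              A * confDist (fun z => Real.exp (-ε * b z)) x y ∧
          ∀ s ∈ Set.Icc t₁ t₂,
            min (∫ t in t₁..s, Real.exp (-ε * b (η t)))
                (∫ t in s..t₂, Real.exp (-ε * b (η t))) ≤
              A * ε⁻¹ * Real.exp (-ε * b (η s)) := by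
  have hexppos := (Real.exp_pos (2*δ*ε)).le
  refine ⟨M + Real.exp (2*δ*ε), by nlinarith, ?_⟩
  intro X _ γ₀ b hgeo hthin hγ hb _hstar hadm x y η t₁ t₂ ht12 hη hx hy
  set A : ℝ := M + Real.exp (2*δ*ε) with hA
  have hMA : M ≤ A := by linarith
  have hexpA : Real.exp (2*δ*ε) ≤ A := by linarith
  have hdxy : dist x y = t₂ - t₁ := by
    rw [← hx, ← hy, hη t₁ ⟨le_refl _, ht12⟩ t₂ ⟨ht12, le_refl _⟩, abs_sub_comm,
      abs_of_nonneg (by linarith)]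
  have hg₁ : GeodesicFromTo (fun u => η (t₁ + u)) x y := by
    refine ⟨?_, ?_, ?_⟩
    · intro u hu v hv
      rw [hdxy] at hu hv
      have h1 : t₁ + u ∈ Set.Icc t₁ t₂ := ⟨by linarith [hu.1], by linarith [hu.2]⟩
      have h2 : t₁ + v ∈ Set.Icc t₁ t₂ := ⟨by linarith [hv.1], by linarith [hv.2]⟩
      have := hη _ h1 _ h2
      simpa [add_sub_add_left_eq_sub] using this
    · simpa using hx
    · rw [hdxy]
      show η (t₁ + (t₂ - t₁)) = y
      have h : t₁ + (t₂ - t₁) = t₂ := by ring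
      rw [h, hy]
  -- change of variables
  have hchange : ∀ a' b' : ℝ, (∫ t in a'..b', Real.exp (-ε * b (η t)))
      = ∫ u in (a' - t₁)..(b' - t₁), Real.exp (-ε * b (η (t₁ + u))) := by
    intro a' b'
    rw [intervalIntegral.integral_comp_add_left (fun t => Real.exp (-ε * b (η t))) t₁]
    congr 1 <;> ring
  have hpart1 : (∫ t in t₁..t₂, Real.exp (-ε * b (η t))) ≤
      A * confDist (fun z => Real.exp (-ε * b z)) x y := by
    have h := hadm x y (fun u => η (t₁ + u)) hg₁
    rw [hdxy] at h
    have hc : (∫ t in t₁..t₂, Real.exp (-ε * b (η t)))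
        = ∫ u in (0:ℝ)..(t₂ - t₁), Real.exp (-ε * b (η (t₁ + u))) := by
      rw [hchange t₁ t₂]; congr 1; ring
    rw [hc]
    calc (∫ u in (0:ℝ)..(t₂ - t₁), Real.exp (-ε * b (η (t₁ + u))))
        ≤ M * confDist (fun z => Real.exp (-ε * b z)) x y := h
      _ ≤ A * confDist (fun z => Real.exp (-ε * b z)) x y :=
          mul_le_mul_of_nonneg_right hMA
            (confDist_nonneg' (fun z => (Real.exp_pos _).le) x y)
  refine ⟨hpart1, ?_⟩
  intro s hs
  have hblip : ∀ p q : X, b p ≤ b q + dist p q := busemann_lip hb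
  have hφcont : ContinuousOn (fun t => b (η t)) (Set.Icc t₁ t₂) := by
    have hl : LipschitzOnWith 1 (fun t => b (η t)) (Set.Icc t₁ t₂) := by
      apply LipschitzOnWith.of_dist_le_mul
      intro u hu v hv
      have hd : dist (η u) (η v) = |u - v| := hη u hu v hv
      have h1 := hblip (η u) (η v)
      have h2 := hblip (η v) (η u)
      have h3 := dist_comm (η v) (η u)
      rw [Real.dist_eq, Real.dist_eq, NNReal.coe_one, one_mul, abs_sub_le_iff]
      constructor <;> [linarith [abs_nonneg (u - v)]; linarith]
    exact hl.continuousOn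
  have hds : dist x (η s) = s - t₁ := by
    rw [← hx, hη t₁ ⟨le_refl _, ht12⟩ s hs, abs_sub_comm, abs_of_nonneg (by linarith [hs.1])]
  have hds' : dist y (η s) = t₂ - s := by
    rw [← hy, hη t₂ ⟨ht12, le_refl _⟩ s hs, abs_of_nonneg (by linarith [hs.2])]
  have hmem : s - t₁ ∈ Set.Icc 0 (dist x y) := by
    rw [hdxy]; exact ⟨by linarith [hs.1], by linarith [hs.2]⟩
  have hkey := key hgeo hthin hγ hb hg₁ hmem
  have hgs : t₁ + (s - t₁) = s := by ring
  simp only [hgs] at hkey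
  have hρpos := (Real.exp_pos (-ε * b (η s))).le
  have hεinv : (0:ℝ) ≤ ε⁻¹ := inv_nonneg.mpr hε.le
  rcases hkey with hcase | hcase
  · -- x side: bound the left integral
    rw [hds] at hcase
    have hbound : (∫ t in t₁..s, Real.exp (-ε * b (η t)))
        ≤ ε⁻¹ * Real.exp (-ε * (b x - (s - t₁))) := by
      apply int_le_left hε hs.1 (hφcont.mono (Set.Icc_subset_Icc le_rfl hs.2))
      intro t ht
      have h1 := hblip (η t₁) (η t)
      have h2 : dist (η t₁) (η t) = t - t₁ := by
        rw [hη t₁ ⟨le_refl _, ht12⟩ t ⟨ht.1, le_trans ht.2 hs.2⟩, abs_sub_comm,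
          abs_of_nonneg (by linarith [ht.1])]
      rw [hx] at h1 h2
      linarith
    refine le_trans (min_le_left _ _) (le_trans hbound ?_)
    have h5 : Real.exp (-ε * (b x - (s - t₁))) ≤ Real.exp (2*δ*ε) * Real.exp (-ε * b (η s)) := by
      rw [← Real.exp_add]
      apply Real.exp_le_exp.mpr
      nlinarith
    calc ε⁻¹ * Real.exp (-ε * (b x - (s - t₁)))
        ≤ ε⁻¹ * (Real.exp (2*δ*ε) * Real.exp (-ε * b (η s))) :=
          mul_le_mul_of_nonneg_left h5 hεinv
      _ ≤ A * ε⁻¹ * Real.exp (-ε * b (η s)) := by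
          nlinarith [mul_le_mul_of_nonneg_left
            (mul_le_mul_of_nonneg_right hexpA hρpos) hεinv]
  · -- y side: bound the right integral
    rw [hds'] at hcase
    have hbound : (∫ t in s..t₂, Real.exp (-ε * b (η t)))
        ≤ ε⁻¹ * Real.exp (-ε * (b y - (t₂ - s))) := by
      apply int_le_right hε hs.2 (hφcont.mono (Set.Icc_subset_Icc hs.1 le_rfl))
      intro t ht
      have h1 := hblip (η t₂) (η t)
      have h2 : dist (η t₂) (η t) = t₂ - t := by
        rw [hη t₂ ⟨ht12, le_refl _⟩ t ⟨le_trans hs.1 ht.1, ht.2⟩,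
          abs_of_nonneg (by linarith [ht.2])]
      rw [hy] at h1 h2
      linarith
    refine le_trans (min_le_right _ _) (le_trans hbound ?_)
    have h5 : Real.exp (-ε * (b y - (t₂ - s))) ≤ Real.exp (2*δ*ε) * Real.exp (-ε * b (η s)) := by
      rw [← Real.exp_add]
      apply Real.exp_le_exp.mpr
      nlinarith
    calc ε⁻¹ * Real.exp (-ε * (b y - (t₂ - s)))
        ≤ ε⁻¹ * (Real.exp (2*δ*ε) * Real.exp (-ε * b (η s))) :=
          mul_le_mul_of_nonneg_left h5 hεinv
      _ ≤ A * ε⁻¹ * Real.exp (-ε * b (η s)) := by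
          nlinarith [mul_le_mul_of_nonneg_left
            (mul_le_mul_of_nonneg_right hexpA hρpos) hεinv]
end

section
/- Let δ ≥ 0, K ≥ 0, ε > 0, M ≥ 1. There exists a constant C ≥ 1 depending only on δ, K, ε, M such that the following holds. Let X be a geodesic metric space in which geodesic triangles are δ-thin, let γ₀ : [0,∞) → X be a geodesic ray with Busemann function b, suppose X satisfies the interior K-rough-starlikeness condition with respect to γ₀, and suppose ρ_ε is admissible with constant M. Then for all x, y ∈ X: if ε·d(x,y) ≤ 1 then C⁻¹·e^{−ε(x|y)_b}·d(x,y) ≤ d_ε(x,y) ≤ C·e^{−ε(x|y)_b}·d(x,y), and if ε·d(x,y) ≥ 1 then C⁻¹·ε⁻¹·e^{−ε(x|y)_b} ≤ d_ε(x,y) ≤ C·ε⁻¹·e^{−ε(x|y)_b}. -/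
open Filter MeasureTheory Set

/-- The Gromov product `(x|y)_b` based at a Busemann function `b`. -/
noncomputable def gromovB {X : Type*} [MetricSpace X] (b : X → ℝ) (x y : X) : ℝ :=
  (b x + b y - dist x y) / 2

lemma expInt (k c a b : ℝ) (hk : k ≠ 0) :
    ∫ t in a..b, Real.exp (k * t + c) = (Real.exp (k * b + c) - Real.exp (k * a + c)) / k := by
  have h : ∀ x ∈ Set.uIcc a b, HasDerivAt (fun t => Real.exp (k * t + c) / k)
      (Real.exp (k * x + c)) x := by
    intro x _
    have h1 : HasDerivAt (fun t : ℝ => k * t + c) k x := by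
      simpa using ((hasDerivAt_id x).const_mul k).add_const c
    have h2 := ((Real.hasDerivAt_exp (k * x + c)).comp x h1).div_const k
    simpa [mul_div_cancel_right₀ _ hk] using h2
  rw [intervalIntegral.integral_eq_sub_of_hasDerivAt h
    (by apply Continuous.intervalIntegrable; continuity)]
  ring

lemma IsGeodesicOn.lipschitzOnWith' {X : Type*} [MetricSpace X] {g : ℝ → X} {s : Set ℝ}
    (h : IsGeodesicOn g s) : LipschitzOnWith 1 g s := by
  apply LipschitzOnWith.of_dist_le_mul
  intro u hu v hv
  rw [h u hu v hv, NNReal.coe_one, one_mul, Real.dist_eq]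

set_option maxHeartbeats 2000000 in
/-- Theorem (two-scale estimate for the uniformized distance `d_ε`). -/
theorem statement2 (δ K ε M : ℝ) (hδ : 0 ≤ δ) (hK : 0 ≤ K) (hε : 0 < ε) (hM : 1 ≤ M) :
    ∃ C : ℝ, 1 ≤ C ∧
      ∀ (X : Type) [MetricSpace X] (γ₀ : ℝ → X) (b : X → ℝ),
        GeodesicSpace X →
        ThinTriangles X δ →
        IsGeodesicOn γ₀ (Set.Ici 0) →
        (∀ x : X, Tendsto (fun t : ℝ => dist (γ₀ t) x - t) atTop (nhds (b x))) →
        RoughStarlikeInt γ₀ K →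
        Admissible (fun z => Real.exp (-ε * b z)) M →
        ∀ x y : X,
          (ε * dist x y ≤ 1 →
            C⁻¹ * Real.exp (-ε * gromovB b x y) * dist x y ≤
                confDist (fun z => Real.exp (-ε * b z)) x y ∧
            confDist (fun z => Real.exp (-ε * b z)) x y ≤
                C * Real.exp (-ε * gromovB b x y) * dist x y) ∧
          (1 ≤ ε * dist x y →
            C⁻¹ * ε⁻¹ * Real.exp (-ε * gromovB b x y) ≤
                confDist (fun z => Real.exp (-ε * b z)) x y ∧
            confDist (fun z => Real.exp (-ε * b z)) x y ≤
                C * ε⁻¹ * Real.exp (-ε * gromovB b x y)) := by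
  classical
  refine ⟨3 * M * Real.exp (3 * ε * δ + 2), ?_, ?_⟩
  · have h1 : (1:ℝ) ≤ Real.exp (3 * ε * δ + 2) := by
      rw [show (1:ℝ) = Real.exp 0 by simp]
      apply Real.exp_le_exp.mpr
      positivity
    nlinarith
  intro X instX γ₀ b hgeo hthin hγ hb hstar hadm x y
  set C := 3 * M * Real.exp (3 * ε * δ + 2) with hC
  have hM0 : (0:ℝ) < M := lt_of_lt_of_le one_pos hM
  have hC1 : (1:ℝ) ≤ C := by
    have h1 : (1:ℝ) ≤ Real.exp (3 * ε * δ + 2) := by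
      rw [show (1:ℝ) = Real.exp 0 by simp]
      apply Real.exp_le_exp.mpr
      positivity
    nlinarith
  have hC0 : (0:ℝ) < C := lt_of_lt_of_le one_pos hC1
  set ρ : X → ℝ := fun z => Real.exp (-ε * b z) with hρ
  set d := dist x y with hdd
  have hd : 0 ≤ d := dist_nonneg
  obtain ⟨g, hg⟩ := hgeo x y
  obtain ⟨hgI, hg0, hgd⟩ := hg
  -- b is 1-Lipschitz
  have hbL : ∀ z w : X, b z ≤ b w + dist z w := by
    intro z w
    have h3 : Tendsto (fun t => (dist (γ₀ t) z - t) - (dist (γ₀ t) w - t)) atTop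
        (nhds (b z - b w)) := (hb z).sub (hb w)
    have hle : b z - b w ≤ dist z w := by
      apply le_of_tendsto h3
      filter_upwards with t
      have h4 : dist (γ₀ t) z ≤ dist (γ₀ t) w + dist w z := dist_triangle _ _ _
      rw [dist_comm z w]
      show dist (γ₀ t) z - t - (dist (γ₀ t) w - t) ≤ dist w z
      linarith
    linarith
  -- Busemann monotonicity along the ray
  have hbmon : ∀ z : X, ∀ n : ℝ, 0 ≤ n → b z ≤ dist (γ₀ n) z - n := by
    intro z n hn
    apply le_of_tendsto (hb z)
    filter_upwards [eventually_ge_atTop n] with t ht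
    have h1 : dist (γ₀ t) (γ₀ n) = |t - n| := hγ t (le_trans hn ht) n hn
    have h2 : dist (γ₀ t) z ≤ dist (γ₀ t) (γ₀ n) + dist (γ₀ n) z := dist_triangle _ _ _
    rw [abs_of_nonneg (by linarith)] at h1
    linarith
  have hbLip : LipschitzWith 1 b := by
    apply LipschitzWith.of_dist_le_mul
    intro z w
    rw [Real.dist_eq, NNReal.coe_one, one_mul, abs_sub_le_iff]
    constructor
    · have := hbL z w; linarith
    · have := hbL w z; rw [dist_comm w z] at this; linarith
  -- distances along g
  have hdx : ∀ u ∈ Icc (0:ℝ) d, dist x (g u) = u := by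
    intro u hu
    have := hgI 0 ⟨le_refl 0, hd⟩ u hu
    rw [hg0] at this
    rw [this, abs_of_nonpos (by linarith [hu.1]), neg_sub]
    simp
  have hdy : ∀ u ∈ Icc (0:ℝ) d, dist y (g u) = d - u := by
    intro u hu
    have := hgI d ⟨hd, le_refl d⟩ u hu
    rw [hgd] at this
    rw [this, abs_of_nonneg (by linarith [hu.2])]
  -- b along g
  have hbg_ub1 : ∀ u ∈ Icc (0:ℝ) d, b (g u) ≤ b x + u := by
    intro u hu
    have := hbL (g u) x
    rw [dist_comm, hdx u hu] at this
    linarith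
  have hbg_ub2 : ∀ u ∈ Icc (0:ℝ) d, b (g u) ≤ b y + (d - u) := by
    intro u hu
    have := hbL (g u) y
    rw [dist_comm, hdy u hu] at this
    linarith
  have hbg_lb1 : ∀ u ∈ Icc (0:ℝ) d, b x - u ≤ b (g u) := by
    intro u hu
    have := hbL x (g u)
    rw [hdx u hu] at this
    linarith
  have hbg_lb2 : ∀ u ∈ Icc (0:ℝ) d, b y - (d - u) ≤ b (g u) := by
    intro u hu
    have := hbL y (g u)
    rw [hdy u hu] at this
    linarith
  -- |b x - b y| ≤ d
  have hbxy1 : b x ≤ b y + d := by have := hbL x y; rw [← hdd] at this; exact this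
  have hbxy2 : b y ≤ b x + d := by have := hbL y x; rw [dist_comm, ← hdd] at this; exact this
  set P := gromovB b x y with hP
  have hPval : P = (b x + b y - d) / 2 := rfl
  set E := Real.exp (-ε * P) with hE
  have hE0 : 0 < E := Real.exp_pos _
  -- continuity and integrability of ρ ∘ g
  have hgLip : LipschitzOnWith 1 g (Icc 0 d) := hgI.lipschitzOnWith'
  have hρc : Continuous ρ := Real.continuous_exp.comp (continuous_const.mul hbLip.continuous)
  have hcont : ContinuousOn (fun u => ρ (g u)) (Icc 0 d) :=
    hρc.comp_continuousOn hgLip.continuousOn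
  have hint : IntervalIntegrable (fun u => ρ (g u)) volume 0 d := by
    apply ContinuousOn.intervalIntegrable
    rwa [uIcc_of_le hd]
  -- upper bound: confDist ≤ ρ-length of g
  have hbdd : BddBelow {ℓ : ℝ | ∃ L : ℝ, 0 ≤ L ∧ ∃ c : ℝ → X,
      LipschitzOnWith 1 c (Set.Icc 0 L) ∧ c 0 = x ∧ c L = y ∧
      ℓ = ∫ u in (0:ℝ)..L, ρ (c u)} := by
    refine ⟨0, fun ℓ hℓ => ?_⟩
    obtain ⟨L, hL, c, hc, hc0, hcL, rfl⟩ := hℓ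
    exact intervalIntegral.integral_nonneg hL (fun u _ => (Real.exp_pos _).le)
  have key_ub : confDist ρ x y ≤ ∫ u in (0:ℝ)..d, ρ (g u) := by
    apply csInf_le hbdd
    exact ⟨d, hd, g, hgLip, hg0, hgd, rfl⟩
  -- lower bound from admissibility
  have key_lb : (∫ u in (0:ℝ)..d, ρ (g u)) ≤ M * confDist ρ x y :=
    hadm x y g ⟨hgI, hg0, hgd⟩
  -- split point for upper estimates
  set t₀ := (d + b x - b y) / 2 with ht₀
  have ht₀mem : t₀ ∈ Icc (0:ℝ) d := ⟨by rw [ht₀]; linarith, by rw [ht₀]; linarith⟩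
  have hintL : IntervalIntegrable (fun u => ρ (g u)) volume 0 t₀ :=
    hint.mono_set (by rw [uIcc_of_le ht₀mem.1, uIcc_of_le hd]; exact Icc_subset_Icc le_rfl ht₀mem.2)
  have hintR : IntervalIntegrable (fun u => ρ (g u)) volume t₀ d :=
    hint.mono_set (by
      rw [uIcc_of_le ht₀mem.2, uIcc_of_le hd]; exact Icc_subset_Icc ht₀mem.1 le_rfl)
  have hsplit : (∫ u in (0:ℝ)..d, ρ (g u)) =
      (∫ u in (0:ℝ)..t₀, ρ (g u)) + ∫ u in t₀..d, ρ (g u) :=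
    (intervalIntegral.integral_add_adjacent_intervals hintL hintR).symm
  -- pointwise exponential bounds
  have hpt1 : ∀ u ∈ Icc (0:ℝ) t₀, ρ (g u) ≤ Real.exp (ε * u + (-ε * b x)) := by
    intro u hu
    have hu' : u ∈ Icc (0:ℝ) d := ⟨hu.1, le_trans hu.2 ht₀mem.2⟩
    apply Real.exp_le_exp.mpr
    have := hbg_lb1 u hu'
    nlinarith [hε.le]
  have hpt2 : ∀ u ∈ Icc t₀ d, ρ (g u) ≤ Real.exp (-ε * u + (ε * d - ε * b y)) := by
    intro u hu
    have hu' : u ∈ Icc (0:ℝ) d := ⟨le_trans ht₀mem.1 hu.1, hu.2⟩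
    apply Real.exp_le_exp.mpr
    have := hbg_lb2 u hu'
    nlinarith [hε.le]
  have hEq1 : ε * t₀ + (-ε * b x) = -ε * P := by rw [hPval, ht₀]; ring
  have hEq2 : -ε * t₀ + (ε * d - ε * b y) = -ε * P := by rw [hPval, ht₀]; ring
  -- the two scale-dependent upper bounds for the integral
  have hub_small : (∫ u in (0:ℝ)..d, ρ (g u)) ≤ d * E := by
    have h1 : (∫ u in (0:ℝ)..t₀, ρ (g u)) ≤ t₀ * E := by
      have hmono : (∫ u in (0:ℝ)..t₀, ρ (g u)) ≤ ∫ _u in (0:ℝ)..t₀, E := by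
        apply intervalIntegral.integral_mono_on ht₀mem.1 hintL intervalIntegrable_const
        intro u hu
        refine le_trans (hpt1 u hu) ?_
        rw [hE, ← hEq1]
        apply Real.exp_le_exp.mpr
        nlinarith [hu.2, hε.le]
      rwa [intervalIntegral.integral_const, smul_eq_mul, sub_zero] at hmono
    have h2 : (∫ u in t₀..d, ρ (g u)) ≤ (d - t₀) * E := by
      have hmono : (∫ u in t₀..d, ρ (g u)) ≤ ∫ _u in t₀..d, E := by
        apply intervalIntegral.integral_mono_on ht₀mem.2 hintR intervalIntegrable_const
        intro u hu
        refine le_trans (hpt2 u hu) ?_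
        rw [hE, ← hEq2]
        apply Real.exp_le_exp.mpr
        nlinarith [hu.1, hε.le]
      rwa [intervalIntegral.integral_const, smul_eq_mul] at hmono
    rw [hsplit]; linarith
  have hub_large : (∫ u in (0:ℝ)..d, ρ (g u)) ≤ 2 * E / ε := by
    have h1 : (∫ u in (0:ℝ)..t₀, ρ (g u)) ≤ E / ε := by
      have hmono := intervalIntegral.integral_mono_on ht₀mem.1 hintL
        (by apply Continuous.intervalIntegrable; fun_prop)
        hpt1
      rw [expInt ε (-ε * b x) 0 t₀ (ne_of_gt hε), hEq1, ← hE] at hmono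
      refine le_trans hmono ?_
      have h5 := Real.exp_pos (ε * 0 + (-ε * b x))
      gcongr
      linarith
    have h2 : (∫ u in t₀..d, ρ (g u)) ≤ E / ε := by
      have hmono := intervalIntegral.integral_mono_on ht₀mem.2 hintR
        (by apply Continuous.intervalIntegrable; fun_prop)
        hpt2
      rw [expInt (-ε) (ε * d - ε * b y) t₀ d (by linarith)] at hmono
      have hEq3 : -ε * d + (ε * d - ε * b y) = -ε * b y := by ring
      rw [hEq3, hEq2, ← hE] at hmono
      rw [div_neg, ← neg_div, neg_sub] at hmono
      refine le_trans hmono ?_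
      have h5 := Real.exp_pos (-ε * b y)
      gcongr
      linarith
    rw [hsplit]
    calc (∫ u in (0:ℝ)..t₀, ρ (g u)) + ∫ u in t₀..d, ρ (g u) ≤ E / ε + E / ε :=
          add_le_add h1 h2
      _ = 2 * E / ε := by ring
  
  -- small-scale lower bound for the integral
  have hlb_small : ε * d ≤ 1 → d * E * Real.exp (-(2:ℝ)) ≤ ∫ u in (0:ℝ)..d, ρ (g u) := by
    intro hεd
    have hptc : ∀ u ∈ Icc (0:ℝ) d, E * Real.exp (-(2:ℝ)) ≤ ρ (g u) := by
      intro u hu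
      have h1 := hbg_ub1 u hu
      show E * Real.exp (-(2:ℝ)) ≤ Real.exp (-ε * b (g u))
      rw [hE, ← Real.exp_add]
      apply Real.exp_le_exp.mpr
      rw [hPval]
      have key : b (g u) ≤ b x + d := by linarith [hu.2]
      linarith [mul_le_mul_of_nonneg_left key hε.le,
        mul_le_mul_of_nonneg_left hbxy1 hε.le, hεd]
    have hmono : (∫ _u in (0:ℝ)..d, E * Real.exp (-(2:ℝ))) ≤ ∫ u in (0:ℝ)..d, ρ (g u) :=
      intervalIntegral.integral_mono_on hd intervalIntegrable_const hint hptc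
    rwa [intervalIntegral.integral_const, smul_eq_mul, sub_zero, ← mul_assoc] at hmono
  -- minimizer of b along g
  obtain ⟨tm, htm, htmin⟩ : ∃ tm ∈ Icc (0:ℝ) d, IsMinOn (fun u => b (g u)) (Icc 0 d) tm :=
    isCompact_Icc.exists_isMinOn (nonempty_Icc.mpr hd)
      (hbLip.continuous.comp_continuousOn hgLip.continuousOn)
  -- the hyperbolic estimate: the geodesic reaches level (x|y)_b + 3δ
  have hkey : b (g tm) ≤ P + 3 * δ := by
    apply le_of_forall_pos_le_add
    intro η hη
    -- limit of gromov products
    have hlim : Tendsto (fun t => gromov (γ₀ t) x y - t + (3 * δ + η)) atTop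
        (nhds (P + 3 * δ + η)) := by
      have h1 : Tendsto (fun t => ((dist (γ₀ t) x - t) + (dist (γ₀ t) y - t) - d) / 2
          + (3 * δ + η)) atTop (nhds ((b x + b y - d) / 2 + (3 * δ + η))) := by
        exact ((((hb x).add (hb y)).sub_const d).div_const 2).add_const _
      rw [hPval, show (b x + b y - d) / 2 + 3 * δ + η
        = (b x + b y - d) / 2 + (3 * δ + η) by ring]
      apply h1.congr
      intro t
      rw [gromov, dist_comm x (γ₀ t), dist_comm y (γ₀ t), ← hdd]
      ring
    refine ge_of_tendsto hlim ?_
    filter_upwards [eventually_ge_atTop (0:ℝ)] with t ht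
    -- the triangle argument with apex p = γ₀ t
    set p := γ₀ t with hp
    obtain ⟨g₂, hg₂I, hg₂0, hg₂e⟩ := hgeo x p
    obtain ⟨g₃, hg₃I, hg₃0, hg₃e⟩ := hgeo y p
    set A := g '' Icc (0:ℝ) d with hA
    set B := g₃ '' Icc (0:ℝ) (dist y p) with hB
    have hAne : A.Nonempty := ⟨x, ⟨0, ⟨le_refl 0, hd⟩, hg0⟩⟩
    have hBne : B.Nonempty := ⟨y, ⟨0, ⟨le_refl 0, dist_nonneg⟩, hg₃0⟩⟩
    have hpB : p ∈ B := ⟨dist y p, ⟨dist_nonneg, le_refl _⟩, hg₃e⟩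
    set f : ℝ → ℝ := fun s => Metric.infDist (g₂ s) A - Metric.infDist (g₂ s) B with hf
    have hfc : ContinuousOn f (Icc 0 (dist x p)) := by
      apply ContinuousOn.sub
      · exact (Metric.continuous_infDist_pt A).comp_continuousOn
          (hg₂I.lipschitzOnWith').continuousOn
      · exact (Metric.continuous_infDist_pt B).comp_continuousOn
          (hg₂I.lipschitzOnWith').continuousOn
    have hf0 : f 0 ≤ 0 := by
      have : Metric.infDist (g₂ 0) A = 0 := by
        rw [hg₂0]
        exact Metric.infDist_zero_of_mem ⟨0, ⟨le_refl 0, hd⟩, hg0⟩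
      rw [hf]
      simp only [this]
      linarith [Metric.infDist_nonneg (x := g₂ 0) (s := B)]
    have hfD : 0 ≤ f (dist x p) := by
      have : Metric.infDist (g₂ (dist x p)) B = 0 := by
        rw [hg₂e]
        exact Metric.infDist_zero_of_mem hpB
      rw [hf]
      simp only [this]
      linarith [Metric.infDist_nonneg (x := g₂ (dist x p)) (s := A)]
    obtain ⟨s₀, hs₀mem, hs₀⟩ : ∃ s₀ ∈ Icc (0:ℝ) (dist x p), f s₀ = 0 := by
      have := intermediate_value_Icc dist_nonneg hfc (Set.mem_Icc.mpr ⟨hf0, hfD⟩)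
      obtain ⟨s₀, hs₀mem, hs₀⟩ := this
      exact ⟨s₀, hs₀mem, hs₀⟩
    -- thinness at s₀
    have hthin' := (hthin x y p g g₂ g₃ ⟨hgI, hg0, hgd⟩ ⟨hg₂I, hg₂0, hg₂e⟩
      ⟨hg₃I, hg₃0, hg₃e⟩).2.1 s₀ hs₀mem
    obtain ⟨q, hq, hqd⟩ := hthin'
    have hinfA : Metric.infDist (g₂ s₀) A ≤ δ := by
      rcases hq with hq | hq
      · exact le_trans (Metric.infDist_le_dist_of_mem (by rw [hA, hdd]; exact hq)) hqd
      · have h2 : Metric.infDist (g₂ s₀) B ≤ δ := le_trans (Metric.infDist_le_dist_of_mem (by rw [hB]; exact hq)) hqd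
        have h3 : Metric.infDist (g₂ s₀) A = Metric.infDist (g₂ s₀) B := by
          have := hs₀; rw [hf] at this; simp only at this; linarith
        linarith
    have hinfB : Metric.infDist (g₂ s₀) B ≤ δ := by
      have h3 : Metric.infDist (g₂ s₀) A = Metric.infDist (g₂ s₀) B := by
        have := hs₀; rw [hf] at this; simp only at this; linarith
      linarith
    -- pick approximate nearest points
    obtain ⟨u, huA, hu⟩ := (Metric.infDist_lt_iff hAne).mp
      (lt_of_le_of_lt hinfA (by linarith : δ < δ + η / 3))
    obtain ⟨v, hvB, hv⟩ := (Metric.infDist_lt_iff hBne).mp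
      (lt_of_le_of_lt hinfB (by linarith : δ < δ + η / 3))
    obtain ⟨s, hs, rfl⟩ := huA
    obtain ⟨r, hr, rfl⟩ := hvB
    -- distance computations
    have hw0 : dist x (g₂ s₀) = s₀ := by
      have := hg₂I 0 ⟨le_refl 0, dist_nonneg⟩ s₀ hs₀mem
      rw [hg₂0] at this
      rw [this, abs_of_nonpos (by linarith [hs₀mem.1]), neg_sub, sub_zero]
    have hwp : dist p (g₂ s₀) = dist x p - s₀ := by
      have := hg₂I (dist x p) ⟨dist_nonneg, le_refl _⟩ s₀ hs₀mem
      rw [hg₂e] at this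
      rw [this, abs_of_nonneg (by linarith [hs₀mem.2])]
    have hyv : dist y (g₃ r) = r := by
      have := hg₃I 0 ⟨le_refl 0, dist_nonneg⟩ r hr
      rw [hg₃0] at this
      rw [this, abs_of_nonpos (by linarith [hr.1]), neg_sub, sub_zero]
    have hpv : dist p (g₃ r) = dist y p - r := by
      have := hg₃I (dist y p) ⟨dist_nonneg, le_refl _⟩ r hr
      rw [hg₃e] at this
      rw [this, abs_of_nonneg (by linarith [hr.2])]
    have hxu : dist x (g s) = s := hdx s hs
    have hyu : dist y (g s) = d - s := hdy s hs
    -- inequality (i): dist p (g s) ≤ dist x p - s + 2(δ + η/3)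
    have hineq1 : dist p (g s) ≤ dist x p - s + 2 * (δ + η / 3) := by
      have t1 : dist p (g s) ≤ dist p (g₂ s₀) + dist (g₂ s₀) (g s) := dist_triangle _ _ _
      have t2 : dist x (g s) ≤ dist x (g₂ s₀) + dist (g₂ s₀) (g s) := dist_triangle _ _ _
      rw [hxu] at t2
      rw [hwp] at t1
      linarith [hu, le_of_lt hu]
    -- inequality (ii): dist p (g s) ≤ dist y p - (d - s) + 4(δ + η/3)
    have hineq2 : dist p (g s) ≤ dist y p - (d - s) + 4 * (δ + η / 3) := by
      have t1 : dist p (g s) ≤ dist p (g₃ r) + dist (g₃ r) (g₂ s₀) + dist (g₂ s₀) (g s) := by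
        calc dist p (g s) ≤ dist p (g₂ s₀) + dist (g₂ s₀) (g s) := dist_triangle _ _ _
          _ ≤ (dist p (g₃ r) + dist (g₃ r) (g₂ s₀)) + dist (g₂ s₀) (g s) := by
              linarith [dist_triangle p (g₃ r) (g₂ s₀)]
      have t2 : dist y (g s) ≤ dist y (g₃ r) + dist (g₃ r) (g₂ s₀) + dist (g₂ s₀) (g s) := by
        calc dist y (g s) ≤ dist y (g₃ r) + dist (g₃ r) (g s) := dist_triangle _ _ _
          _ ≤ dist y (g₃ r) + (dist (g₃ r) (g₂ s₀) + dist (g₂ s₀) (g s)) := by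
              linarith [dist_triangle (g₃ r) (g₂ s₀) (g s)]
          _ = dist y (g₃ r) + dist (g₃ r) (g₂ s₀) + dist (g₂ s₀) (g s) := by ring
      rw [hyu] at t2
      rw [hpv] at t1
      have hvw : dist (g₃ r) (g₂ s₀) = dist (g₂ s₀) (g₃ r) := dist_comm _ _
      rw [hvw] at t1 t2
      linarith [hu, hv]
    -- combine: dist p (g s) ≤ gromov p x y + 3δ + η
    have hcomb : dist p (g s) ≤ gromov p x y + 3 * δ + η := by
      rw [gromov, ← hdd]
      linarith
    -- conclude
    have hb1 : b (g tm) ≤ b (g s) := htmin hs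
    have hb2 : b (g s) ≤ dist (γ₀ t) (g s) - t := hbmon (g s) t ht
    rw [← hp] at hb2
    rw [gromov] at hcomb ⊢
    linarith
  
  -- pointwise bound around the minimizer
  have hbstar : ∀ u ∈ Icc (0:ℝ) d, b (g u) ≤ b (g tm) + |u - tm| := by
    intro u hu
    have h1 := hbL (g u) (g tm)
    have h2 : dist (g u) (g tm) = |u - tm| := hgI u hu tm htm
    linarith [h1, h2.le, h2.ge]
  set B := b (g tm) with hB
  -- large-scale lower bound for the integral
  have hlb_large : 1 ≤ ε * d → Real.exp (-ε * B) / (3 * ε) ≤ ∫ u in (0:ℝ)..d, ρ (g u) := by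
    intro h1d
    set hw : ℝ := (2 * ε)⁻¹ with hh_def
    have hh0 : 0 < hw := by rw [hh_def]; positivity
    have hεh : ε * hw = 2⁻¹ := by
      rw [hh_def, mul_inv, mul_comm (2:ℝ)⁻¹, ← mul_assoc, mul_inv_cancel₀ (ne_of_gt hε), one_mul]
    have hh2 : hw ≤ d / 2 := by
      have e : d / 2 - hw = (ε * d - 1) / (2 * ε) := by
        rw [eq_div_iff (ne_of_gt (by positivity : (0:ℝ) < 2 * ε))]
        linear_combination (-2 : ℝ) * hεh
      have : (0:ℝ) ≤ (ε * d - 1) / (2 * ε) := div_nonneg (by linarith) (by positivity)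
      linarith
    have hexphalf : Real.exp (-(2⁻¹):ℝ) ≤ 2 / 3 := by
      rw [Real.exp_neg]
      have h1 := Real.add_one_le_exp (2⁻¹:ℝ)
      have h2 : (0:ℝ) < 3 / 2 := by norm_num
      have h3 : (3/2 : ℝ) ≤ Real.exp 2⁻¹ := by linarith
      calc (Real.exp 2⁻¹)⁻¹ ≤ (3/2 : ℝ)⁻¹ := by
            apply inv_anti₀ h2 h3
        _ = 2/3 := by norm_num
    have hnum : Real.exp (-ε * B) / 3 ≤ Real.exp (-ε * B) - Real.exp (-(2⁻¹) + -ε * B) := by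
      rw [Real.exp_add]
      nlinarith [Real.exp_pos (-ε * B), hexphalf]
    rcases le_or_gt tm (d / 2) with hc | hc
    · -- interval [tm, tm + hw]
      have hsub1 : tm + hw ≤ d := by linarith
      have hint1 : IntervalIntegrable (fun u => ρ (g u)) volume 0 tm :=
        hint.mono_set (by rw [uIcc_of_le htm.1, uIcc_of_le hd]; exact Icc_subset_Icc le_rfl htm.2)
      have hint2 : IntervalIntegrable (fun u => ρ (g u)) volume tm (tm + hw) :=
        hint.mono_set (by
          rw [uIcc_of_le (by linarith : tm ≤ tm + hw), uIcc_of_le hd]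
          exact Icc_subset_Icc htm.1 hsub1)
      have hint3 : IntervalIntegrable (fun u => ρ (g u)) volume (tm + hw) d :=
        hint.mono_set (by
          rw [uIcc_of_le hsub1, uIcc_of_le hd]
          exact Icc_subset_Icc (by linarith [htm.1]) le_rfl)
      have hint23 : IntervalIntegrable (fun u => ρ (g u)) volume tm d :=
        hint.mono_set (by rw [uIcc_of_le htm.2, uIcc_of_le hd]; exact Icc_subset_Icc htm.1 le_rfl)
      have e1 := intervalIntegral.integral_add_adjacent_intervals hint2 hint3
      have e2 := intervalIntegral.integral_add_adjacent_intervals hint1 hint23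
      have hn1 : 0 ≤ ∫ u in (0:ℝ)..tm, ρ (g u) :=
        intervalIntegral.integral_nonneg htm.1 (fun u _ => (Real.exp_pos _).le)
      have hn3 : 0 ≤ ∫ u in (tm+hw)..d, ρ (g u) :=
        intervalIntegral.integral_nonneg hsub1 (fun u _ => (Real.exp_pos _).le)
      have hptm : ∀ u ∈ Icc tm (tm + hw),
          Real.exp (-ε * u + (ε * tm - ε * B)) ≤ ρ (g u) := by
        intro u hu
        have huIcc : u ∈ Icc 0 d := ⟨le_trans htm.1 hu.1, le_trans hu.2 hsub1⟩
        show _ ≤ Real.exp (-ε * b (g u))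
        apply Real.exp_le_exp.mpr
        have h2 : b (g u) ≤ B + (u - tm) := by
          have := hbstar u huIcc
          rwa [abs_of_nonneg (by linarith [hu.1])] at this
        linarith [mul_le_mul_of_nonneg_left h2 hε.le]
      have hmono := intervalIntegral.integral_mono_on (by linarith : tm ≤ tm + hw)
        (by apply Continuous.intervalIntegrable; fun_prop) hint2 hptm
      rw [expInt (-ε) (ε * tm - ε * B) tm (tm + hw) (by linarith)] at hmono
      have e3 : -ε * (tm + hw) + (ε * tm - ε * B) = -(2⁻¹) + -ε * B := by
        linear_combination -hεh
      have e4 : -ε * tm + (ε * tm - ε * B) = -ε * B := by ring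
      rw [e3, e4, div_neg, ← neg_div, neg_sub] at hmono
      have hfin : Real.exp (-ε * B) / (3 * ε) ≤
          (Real.exp (-ε * B) - Real.exp (-(2⁻¹) + -ε * B)) / ε := by
        rw [show Real.exp (-ε * B) / (3 * ε) = (Real.exp (-ε * B) / 3) / ε by ring]
        gcongr
      linarith [le_trans hfin hmono]
    · -- interval [tm - hw, tm]
      have hsub1 : 0 ≤ tm - hw := by linarith
      have hint1 : IntervalIntegrable (fun u => ρ (g u)) volume 0 (tm - hw) :=
        hint.mono_set (by
          rw [uIcc_of_le hsub1, uIcc_of_le hd]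
          exact Icc_subset_Icc le_rfl (by linarith [htm.2]))
      have hint2 : IntervalIntegrable (fun u => ρ (g u)) volume (tm - hw) tm :=
        hint.mono_set (by
          rw [uIcc_of_le (by linarith : tm - hw ≤ tm), uIcc_of_le hd]
          exact Icc_subset_Icc hsub1 htm.2)
      have hint3 : IntervalIntegrable (fun u => ρ (g u)) volume tm d :=
        hint.mono_set (by rw [uIcc_of_le htm.2, uIcc_of_le hd]; exact Icc_subset_Icc htm.1 le_rfl)
      have hint12 : IntervalIntegrable (fun u => ρ (g u)) volume 0 tm :=
        hint.mono_set (by rw [uIcc_of_le htm.1, uIcc_of_le hd]; exact Icc_subset_Icc le_rfl htm.2)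
      have e1 := intervalIntegral.integral_add_adjacent_intervals hint1 hint2
      have e2 := intervalIntegral.integral_add_adjacent_intervals hint12 hint3
      have hn1 : 0 ≤ ∫ u in (0:ℝ)..(tm - hw), ρ (g u) :=
        intervalIntegral.integral_nonneg hsub1 (fun u _ => (Real.exp_pos _).le)
      have hn3 : 0 ≤ ∫ u in tm..d, ρ (g u) :=
        intervalIntegral.integral_nonneg htm.2 (fun u _ => (Real.exp_pos _).le)
      have hptm : ∀ u ∈ Icc (tm - hw) tm,
          Real.exp (ε * u + (-ε * tm - ε * B)) ≤ ρ (g u) := by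
        intro u hu
        have huIcc : u ∈ Icc 0 d := ⟨le_trans hsub1 hu.1, le_trans hu.2 htm.2⟩
        show _ ≤ Real.exp (-ε * b (g u))
        apply Real.exp_le_exp.mpr
        have h2 : b (g u) ≤ B + (tm - u) := by
          have := hbstar u huIcc
          rwa [abs_of_nonpos (by linarith [hu.2]), neg_sub] at this
        linarith [mul_le_mul_of_nonneg_left h2 hε.le]
      have hmono := intervalIntegral.integral_mono_on (by linarith : tm - hw ≤ tm)
        (by apply Continuous.intervalIntegrable; fun_prop) hint2 hptm
      rw [expInt ε (-ε * tm - ε * B) (tm - hw) tm (ne_of_gt hε)] at hmono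
      have e3 : ε * (tm - hw) + (-ε * tm - ε * B) = -(2⁻¹) + -ε * B := by
        linear_combination -hεh
      have e4 : ε * tm + (-ε * tm - ε * B) = -ε * B := by ring
      rw [e3, e4] at hmono
      have hfin : Real.exp (-ε * B) / (3 * ε) ≤
          (Real.exp (-ε * B) - Real.exp (-(2⁻¹) + -ε * B)) / ε := by
        rw [show Real.exp (-ε * B) / (3 * ε) = (Real.exp (-ε * B) / 3) / ε by ring]
        gcongr
      linarith [le_trans hfin hmono]
  -- nonnegativity of confDist
  have hconf0 : 0 ≤ confDist ρ x y := by
    have h0 : 0 ≤ ∫ u in (0:ℝ)..d, ρ (g u) :=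
      intervalIntegral.integral_nonneg hd (fun u _ => (Real.exp_pos _).le)
    nlinarith [key_lb]
  -- final assembly
  constructor
  · -- small scale
    intro hεd
    constructor
    · -- lower bound
      have h1 : d * E * Real.exp (-(2:ℝ)) ≤ M * confDist ρ x y :=
        le_trans (hlb_small hεd) key_lb
      have hMe : M * Real.exp 2 ≤ C := by
        rw [hC, Real.exp_add]
        have e1 : (1:ℝ) ≤ Real.exp (3 * ε * δ) := Real.one_le_exp (by positivity)
        have e2 := mul_le_mul_of_nonneg_left e1
          (by positivity : (0:ℝ) ≤ 3 * M * Real.exp 2)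
        have e3 : (0:ℝ) ≤ M * Real.exp 2 := by positivity
        nlinarith [e2, e3]
      have hMe0 : (0:ℝ) < M * Real.exp 2 := by positivity
      calc C⁻¹ * E * d ≤ (M * Real.exp 2)⁻¹ * E * d := by
            gcongr
        _ = (d * E * Real.exp (-(2:ℝ))) / M := by
            rw [Real.exp_neg]; ring
        _ ≤ (M * confDist ρ x y) / M := by gcongr
        _ = confDist ρ x y := mul_div_cancel_left₀ _ (ne_of_gt hM0)
    · -- upper bound
      have h8 := le_trans key_ub hub_small
      have h9 : (0:ℝ) ≤ (C - 1) * (E * d) :=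
        mul_nonneg (by linarith) (mul_nonneg hE0.le hd)
      nlinarith [h8, h9]
  · -- large scale
    intro h1d
    constructor
    · -- lower bound
      have hExp : E * Real.exp (-(3 * ε * δ)) ≤ Real.exp (-ε * B) := by
        rw [hE, ← Real.exp_add]
        apply Real.exp_le_exp.mpr
        linarith [mul_le_mul_of_nonneg_left hkey hε.le]
      have h1 : E * Real.exp (-(3 * ε * δ)) / (3 * ε) ≤ M * confDist ρ x y := by
        refine le_trans ?_ (le_trans (hlb_large h1d) key_lb)
        exact div_le_div_of_nonneg_right hExp (by positivity)
      have hMe : 3 * M * Real.exp (3 * ε * δ) ≤ C := by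
        rw [hC, Real.exp_add]
        have e1 : (1:ℝ) ≤ Real.exp 2 := Real.one_le_exp (by norm_num)
        have e2 := mul_le_mul_of_nonneg_left e1
          (by positivity : (0:ℝ) ≤ 3 * M * Real.exp (3 * ε * δ))
        nlinarith [e2]
      have hMe0 : (0:ℝ) < 3 * M * Real.exp (3 * ε * δ) := by positivity
      calc C⁻¹ * ε⁻¹ * E ≤ (3 * M * Real.exp (3 * ε * δ))⁻¹ * ε⁻¹ * E :=
            mul_le_mul_of_nonneg_right (mul_le_mul_of_nonneg_right
              (inv_anti₀ hMe0 hMe) (inv_nonneg.mpr hε.le)) hE0.le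
        _ = (E * Real.exp (-(3 * ε * δ)) / (3 * ε)) / M := by
            rw [Real.exp_neg]; ring
        _ ≤ (M * confDist ρ x y) / M := by gcongr
        _ = confDist ρ x y := mul_div_cancel_left₀ _ (ne_of_gt hM0)
    · -- upper bound
      have h1 := le_trans key_ub hub_large
      have hC2 : (2:ℝ) ≤ C := by
        rw [hC]
        have e1 : (1:ℝ) ≤ Real.exp (3 * ε * δ + 2) := Real.one_le_exp (by positivity)
        have e2 : (1:ℝ) ≤ M * Real.exp (3 * ε * δ + 2) :=
          le_trans (by norm_num) (mul_le_mul hM e1 (by norm_num) (by linarith))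
        nlinarith [e2]
      calc confDist ρ x y ≤ 2 * E / ε := h1
        _ = 2 * ε⁻¹ * E := by ring
        _ ≤ C * ε⁻¹ * E := by gcongr
end

section
/- Let X be a geodesic metric space, let γ₀ : [0,∞) → X be a geodesic ray with Busemann function b, let ε > 0, and suppose ρ_ε is admissible with constant M ≥ 1. Then for all x, y ∈ X: M⁻¹·ρ_ε(x)·ε⁻¹·(1 − e^{−ε·d(x,y)}) ≤ d_ε(x,y) ≤ ρ_ε(x)·ε⁻¹·(e^{ε·d(x,y)} − 1). -/
open Filter MeasureTheory Set

lemma myint_exp (c L : ℝ) (hc : c ≠ 0) :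
    ∫ t in (0:ℝ)..L, Real.exp (c * t) = (Real.exp (c * L) - 1) / c := by
  have := intervalIntegral.integral_comp_mul_left (a := (0:ℝ)) (b := L)
    (fun u => Real.exp u) hc
  simp only [mul_zero] at this
  rw [this, integral_exp]
  simp [smul_eq_mul, div_eq_inv_mul]

/-- The Busemann function is 1-Lipschitz. -/
lemma busemann_lip {X : Type*} [MetricSpace X] (γ₀ : ℝ → X) (b : X → ℝ)
    (hb : ∀ x : X, Tendsto (fun t : ℝ => dist (γ₀ t) x - t) atTop (nhds (b x)))
    (p q : X) : b p ≤ b q + dist p q := by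
  have h := (hb p).sub (hb q)
  have hle : ∀ t : ℝ, (dist (γ₀ t) p - t) - (dist (γ₀ t) q - t) ≤ dist p q := by
    intro t
    have := dist_triangle (γ₀ t) q p
    have h2 : dist q p = dist p q := dist_comm q p
    linarith
  have := le_of_tendsto h (Eventually.of_forall hle)
  linarith

/-- Theorem (Harnack-type two-sided bound for the uniformized distance). -/
theorem statement3 {X : Type*} [MetricSpace X] (hgeo : GeodesicSpace X)
    (γ₀ : ℝ → X) (hray : IsGeodesicOn γ₀ (Set.Ici 0))
    (b : X → ℝ)
    (hb : ∀ x : X, Tendsto (fun t : ℝ => dist (γ₀ t) x - t) atTop (nhds (b x)))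
    (ε M : ℝ) (hε : 0 < ε) (hM : 1 ≤ M)
    (hadm : Admissible (fun z => Real.exp (-ε * b z)) M)
    (x y : X) :
    M⁻¹ * Real.exp (-ε * b x) * ε⁻¹ * (1 - Real.exp (-ε * dist x y)) ≤
        confDist (fun z => Real.exp (-ε * b z)) x y ∧
    confDist (fun z => Real.exp (-ε * b z)) x y ≤
        Real.exp (-ε * b x) * ε⁻¹ * (Real.exp (ε * dist x y) - 1) := by
  set ρ : X → ℝ := fun z => Real.exp (-ε * b z) with hρ
  set D : ℝ := dist x y with hD
  have hD0 : 0 ≤ D := dist_nonneg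
  set A : ℝ := Real.exp (-ε * b x) with hA
  have hA0 : 0 < A := Real.exp_pos _
  set S : Set ℝ := {ℓ : ℝ | ∃ L : ℝ, 0 ≤ L ∧ ∃ c : ℝ → X,
    LipschitzOnWith 1 c (Set.Icc 0 L) ∧
    c 0 = x ∧ c L = y ∧ ℓ = ∫ u in (0:ℝ)..L, ρ (c u)} with hS
  have hconf : confDist ρ x y = sInf S := rfl
  -- b is Lipschitz, hence continuous
  have hblip : LipschitzWith 1 b := by
    apply LipschitzWith.of_dist_le_mul
    intro p q
    rw [Real.dist_eq, NNReal.coe_one, one_mul, abs_sub_le_iff]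
    constructor
    · have := busemann_lip γ₀ b hb p q; linarith
    · have := busemann_lip γ₀ b hb q p; rw [dist_comm q p] at this; linarith
  have hbcont : Continuous b := hblip.continuous
  have hρcont : Continuous ρ := Real.continuous_exp.comp (continuous_const.mul hbcont)
  -- the geodesic from x to y gives a member of S
  obtain ⟨g, hgiso, hg0, hgD⟩ := hgeo x y
  have hglip : LipschitzOnWith 1 g (Set.Icc 0 D) := by
    apply LipschitzOnWith.of_dist_le_mul
    intro u hu v hv
    rw [hgiso u hu v hv, Real.dist_eq]
    simp
  have hgcont : ContinuousOn (fun u => ρ (g u)) (Set.Icc 0 D) :=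
    hρcont.comp_continuousOn hglip.continuousOn
  have hgint : IntervalIntegrable (fun u => ρ (g u)) volume 0 D := by
    apply ContinuousOn.intervalIntegrable
    rwa [uIcc_of_le hD0]
  have hgmem : (∫ u in (0:ℝ)..D, ρ (g u)) ∈ S :=
    ⟨D, hD0, g, hglip, hg0, hgD, rfl⟩
  have hSne : S.Nonempty := ⟨_, hgmem⟩
  -- every element of S is ≥ A * ε⁻¹ * (1 - exp (-ε * D))  (and in particular ≥ 0)
  have key : ∀ ℓ ∈ S, A * ε⁻¹ * (1 - Real.exp (-ε * D)) ≤ ℓ := by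
    rintro ℓ ⟨L, hL, c, hclip, hc0, hcL, rfl⟩
    have hDL : D ≤ L := by
      have h0 : (0:ℝ) ∈ Set.Icc 0 L := ⟨le_refl 0, hL⟩
      have hLm : L ∈ Set.Icc 0 L := ⟨hL, le_refl L⟩
      have := hclip.dist_le_mul 0 h0 L hLm
      rw [hc0, hcL, Real.dist_eq] at this
      simp only [NNReal.coe_one, one_mul] at this
      rw [abs_of_nonpos (by linarith)] at this
      simpa [hD] using this
    have hccont : ContinuousOn (fun u => ρ (c u)) (Set.Icc 0 L) :=
      hρcont.comp_continuousOn hclip.continuousOn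
    have hcint : IntervalIntegrable (fun u => ρ (c u)) volume 0 L := by
      apply ContinuousOn.intervalIntegrable
      rwa [uIcc_of_le hL]
    have hexpint : IntervalIntegrable (fun t => A * Real.exp (-ε * t)) volume 0 L := by
      apply Continuous.intervalIntegrable
      exact continuous_const.mul (Real.continuous_exp.comp (continuous_const.mul continuous_id))
    have hmono : ∫ t in (0:ℝ)..L, A * Real.exp (-ε * t) ≤ ∫ u in (0:ℝ)..L, ρ (c u) := by
      apply intervalIntegral.integral_mono_on hL hexpint hcint
      intro t ht
      have hdist : dist x (c t) ≤ t := by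
        have h0 : (0:ℝ) ∈ Set.Icc 0 L := ⟨le_refl 0, hL⟩
        have := hclip.dist_le_mul 0 h0 t ht
        rw [hc0, Real.dist_eq] at this
        simp only [NNReal.coe_one, one_mul] at this
        rw [abs_of_nonpos (by linarith [ht.1])] at this
        linarith
      have hbt : b (c t) ≤ b x + t := by
        have := busemann_lip γ₀ b hb (c t) x
        rw [dist_comm (c t) x] at this
        linarith
      have : -ε * (b x) + (-ε * t) ≤ -ε * b (c t) := by nlinarith
      calc A * Real.exp (-ε * t) = Real.exp (-ε * b x + -ε * t) := by
            rw [Real.exp_add]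
        _ ≤ ρ (c t) := Real.exp_le_exp.mpr this
    have hval : ∫ t in (0:ℝ)..L, A * Real.exp (-ε * t)
        = A * ((Real.exp (-ε * L) - 1) / (-ε)) := by
      rw [intervalIntegral.integral_const_mul, myint_exp (-ε) L (by linarith)]
    have hLD : Real.exp (-ε * L) ≤ Real.exp (-ε * D) :=
      Real.exp_le_exp.mpr (by nlinarith)
    have : A * ε⁻¹ * (1 - Real.exp (-ε * D)) ≤ A * ((Real.exp (-ε * L) - 1) / (-ε)) := by
      rw [div_eq_mul_inv]
      have hεinv : 0 < ε⁻¹ := inv_pos.mpr hε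
      have h1 : (Real.exp (-ε * L) - 1) * (-ε)⁻¹ = (1 - Real.exp (-ε * L)) * ε⁻¹ := by
        rw [inv_neg]; ring
      rw [h1]
      have h2 : 1 - Real.exp (-ε * D) ≤ 1 - Real.exp (-ε * L) := by linarith
      calc A * ε⁻¹ * (1 - Real.exp (-ε * D)) ≤ A * ε⁻¹ * (1 - Real.exp (-ε * L)) := by
            apply mul_le_mul_of_nonneg_left h2 (by positivity)
        _ = A * ((1 - Real.exp (-ε * L)) * ε⁻¹) := by ring
    linarith [hval ▸ hmono]
  have hbdd : BddBelow S := by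
    refine ⟨0, fun ℓ hℓ => ?_⟩
    obtain ⟨L, hL, c, hclip, hc0, hcL, rfl⟩ := hℓ
    apply intervalIntegral.integral_nonneg hL
    intro u _
    exact (Real.exp_pos _).le
  constructor
  · -- lower bound
    have hlow : A * ε⁻¹ * (1 - Real.exp (-ε * D)) ≤ sInf S := le_csInf hSne key
    have hq : 0 ≤ A * ε⁻¹ * (1 - Real.exp (-ε * D)) := by
      have : Real.exp (-ε * D) ≤ 1 := Real.exp_le_one_iff.mpr (by nlinarith)
      have hεinv : 0 ≤ ε⁻¹ := (inv_pos.mpr hε).le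
      exact mul_nonneg (mul_nonneg hA0.le hεinv) (by linarith)
    have hMinv : M⁻¹ ≤ 1 := by
      rw [inv_le_one_iff₀]; right; exact hM
    have hMinv0 : 0 ≤ M⁻¹ := inv_nonneg.mpr (by linarith)
    calc M⁻¹ * A * ε⁻¹ * (1 - Real.exp (-ε * D))
        = M⁻¹ * (A * ε⁻¹ * (1 - Real.exp (-ε * D))) := by ring
      _ ≤ 1 * (A * ε⁻¹ * (1 - Real.exp (-ε * D))) := by
          apply mul_le_mul_of_nonneg_right hMinv hq
      _ = A * ε⁻¹ * (1 - Real.exp (-ε * D)) := one_mul _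
      _ ≤ sInf S := hlow
  · -- upper bound
    have h1 : sInf S ≤ ∫ u in (0:ℝ)..D, ρ (g u) := csInf_le hbdd hgmem
    have hexpint : IntervalIntegrable (fun t => A * Real.exp (ε * t)) volume 0 D := by
      apply Continuous.intervalIntegrable
      exact continuous_const.mul (Real.continuous_exp.comp (continuous_const.mul continuous_id))
    have hmono : ∫ u in (0:ℝ)..D, ρ (g u) ≤ ∫ t in (0:ℝ)..D, A * Real.exp (ε * t) := by
      apply intervalIntegral.integral_mono_on hD0 hgint hexpint
      intro t ht
      have hdist : dist x (g t) ≤ t := by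
        have h0 : (0:ℝ) ∈ Set.Icc 0 D := ⟨le_refl 0, hD0⟩
        have := hgiso 0 h0 t ht
        rw [hg0] at this
        rw [this, abs_of_nonpos (by linarith [ht.1])]
        linarith
      have hbt : b x ≤ b (g t) + t := by
        have := busemann_lip γ₀ b hb x (g t)
        linarith
      have : -ε * b (g t) ≤ -ε * b x + ε * t := by nlinarith
      calc ρ (g t) ≤ Real.exp (-ε * b x + ε * t) := Real.exp_le_exp.mpr this
        _ = A * Real.exp (ε * t) := by rw [Real.exp_add]
    have hval : ∫ t in (0:ℝ)..D, A * Real.exp (ε * t)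
        = A * ((Real.exp (ε * D) - 1) / ε) := by
      rw [intervalIntegral.integral_const_mul, myint_exp ε D (by linarith)]
    have : A * ((Real.exp (ε * D) - 1) / ε) = A * ε⁻¹ * (Real.exp (ε * D) - 1) := by
      rw [div_eq_mul_inv]; ring
    calc sInf S ≤ ∫ u in (0:ℝ)..D, ρ (g u) := h1
      _ ≤ A * ((Real.exp (ε * D) - 1) / ε) := by rw [← hval]; exact hmono
      _ = A * ε⁻¹ * (Real.exp (ε * D) - 1) := this
end

section
/- Let δ ≥ 0 and let X be a geodesic metric space satisfying the 4δ-tripod condition. Let x, y, z ∈ X and let g₁ : [0, d(x,z)] → X be a geodesic with g₁(0) = x, g₁(d(x,z)) = z, and g₂ : [0, d(y,z)] → X a geodesic with g₂(0) = y, g₂(d(y,z)) = z. Then for every t with 0 ≤ t ≤ min{d(x,z), d(y,z)} one has d(g₁(t), g₂(t)) ≤ 3·d(x,y) + 8δ. -/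
/-!
Measure `g₁ t` and `g₂ t` from `z`, at distances `a = d(x,z) - t` and `b = d(y,z) - t`.
If `min a b ≤ (x|y)_z`, the tripod condition at `z` puts the points at distance `min a b`
from `z` on the two geodesics within `4δ`, and the remaining offset is `|a - b| ≤ d(x,y)`.
Otherwise `t` lies below both `(z|y)_x` and `(z|x)_y`, and the tripod condition at `x` and
at `y` brings `g₁ t` and `g₂ t` within `4δ` of the points at distance `t` from the two ends of
a geodesic `[x,y]`, which are at most `d(x,y)` apart.
-/

open Filter MeasureTheory Set

/-- The `4δ`-tripod condition: two geodesics emanating from a common point `x` stay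
within `4δ` of each other up to the Gromov product `(y|z)_x`. -/
def TripodCond (X : Type*) [MetricSpace X] (δ : ℝ) : Prop :=
  ∀ x y z : X, ∀ g g' : ℝ → X, GeodesicFromTo g x y → GeodesicFromTo g' x z →
    ∀ r : ℝ, 0 ≤ r → r ≤ gromov x y z → dist (g r) (g' r) ≤ 4 * δ

section

variable {X : Type*} [MetricSpace X]

lemma gromov_le_dist_right (p x y : X) : gromov p x y ≤ dist y p := by
  unfold gromov
  linarith [dist_triangle_left x p y, dist_comm x y]

lemma gromov_comm (p x y : X) : gromov p x y = gromov p y x := by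
  unfold gromov
  rw [dist_comm x y]
  ring

lemma gromov_add_gromov (x y z : X) : gromov x z y + gromov z x y = dist x z := by
  unfold gromov
  linarith [dist_comm x y, dist_comm x z, dist_comm y z]

namespace GeodesicFromTo

variable {g : ℝ → X} {x y : X}

lemma dist_eq (hg : GeodesicFromTo g x y) {u v : ℝ} (hu : u ∈ Icc 0 (dist x y))
    (hv : v ∈ Icc 0 (dist x y)) : dist (g u) (g v) = |u - v| :=
  hg.1 u hu v hv

lemma reverse (hg : GeodesicFromTo g x y) :
    GeodesicFromTo (fun s => g (dist x y - s)) y x := by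
  have hyx : dist y x = dist x y := dist_comm y x
  refine ⟨fun u hu v hv => ?_, by simpa using hg.2.2, by simpa [hyx] using hg.2.1⟩
  rw [hyx] at hu hv
  rw [hg.dist_eq ⟨by linarith [hu.2], by linarith [hu.1]⟩
      ⟨by linarith [hv.2], by linarith [hv.1]⟩, ← abs_neg]
  ring_nf

end GeodesicFromTo

namespace TripodCond

variable {δ : ℝ}

lemma dist_le_abs_sub_add_of_min_le_gromov (htri : TripodCond X δ) {x y z : X}
    {γ₁ γ₂ : ℝ → X} (h₁ : GeodesicFromTo γ₁ z x) (h₂ : GeodesicFromTo γ₂ z y)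
    {a b : ℝ} (ha : a ∈ Icc 0 (dist z x)) (hb : b ∈ Icc 0 (dist z y))
    (hab : min a b ≤ gromov z x y) :
    dist (γ₁ a) (γ₂ b) ≤ |a - b| + 4 * δ := by
  set m := min a b
  have hm : 0 ≤ m := le_min ha.1 hb.1
  have hma : m ≤ a := min_le_left a b
  have hmb : m ≤ b := min_le_right a b
  have hclose : dist (γ₁ m) (γ₂ m) ≤ 4 * δ := htri z x y γ₁ γ₂ h₁ h₂ m hm hab
  have hoffset : |a - m| + |m - b| = |a - b| := by
    rcases le_total a b with h | h
    · simp [m, min_eq_left h]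
    · simp [m, min_eq_right h]
  calc dist (γ₁ a) (γ₂ b)
      ≤ dist (γ₁ a) (γ₁ m) + dist (γ₁ m) (γ₂ m) + dist (γ₂ m) (γ₂ b) :=
        dist_triangle4 _ _ _ _
    _ = |a - m| + dist (γ₁ m) (γ₂ m) + |m - b| := by
        rw [h₁.dist_eq ha ⟨hm, hma.trans ha.2⟩, h₂.dist_eq ⟨hm, hmb.trans hb.2⟩ hb]
    _ ≤ |a - b| + 4 * δ := by linarith

lemma dist_le_dist_add_of_le_gromov (htri : TripodCond X δ) {x y z : X} {g₁ g₂ h : ℝ → X}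
    (hg₁ : GeodesicFromTo g₁ x z) (hg₂ : GeodesicFromTo g₂ y z) (hh : GeodesicFromTo h x y)
    {t : ℝ} (ht0 : 0 ≤ t) (htx : t ≤ gromov x z y) (hty : t ≤ gromov y z x) :
    dist (g₁ t) (g₂ t) ≤ dist x y + 8 * δ := by
  have hclose₁ : dist (g₁ t) (h t) ≤ 4 * δ := htri x z y g₁ h hg₁ hh t ht0 htx
  have hclose₂ : dist (g₂ t) (h (dist x y - t)) ≤ 4 * δ :=
    htri y z x g₂ _ hg₂ hh.reverse t ht0 hty
  have htxy : t ≤ dist x y := htx.trans ((gromov_le_dist_right x z y).trans_eq (dist_comm y x))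
  have hmid : dist (h t) (h (dist x y - t)) ≤ dist x y := by
    rw [hh.dist_eq ⟨ht0, htxy⟩ ⟨by linarith, by linarith⟩, abs_le]
    constructor <;> linarith
  calc dist (g₁ t) (g₂ t)
      ≤ dist (g₁ t) (h t) + dist (h t) (h (dist x y - t)) + dist (h (dist x y - t)) (g₂ t) :=
        dist_triangle4 _ _ _ _
    _ ≤ dist x y + 8 * δ := by linarith [dist_comm (h (dist x y - t)) (g₂ t)]

end TripodCond

end

/-- Theorem: two geodesics ending at a common point `z` fellow-travel with error
`3·d(x,y) + 8δ`. -/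
theorem statement5 {X : Type*} [MetricSpace X] (δ : ℝ) (hδ : 0 ≤ δ)
    (hgeo : GeodesicSpace X) (htri : TripodCond X δ)
    (x y z : X) (g₁ g₂ : ℝ → X)
    (hg₁ : GeodesicFromTo g₁ x z) (hg₂ : GeodesicFromTo g₂ y z)
    (t : ℝ) (ht0 : 0 ≤ t) (ht : t ≤ min (dist x z) (dist y z)) :
    dist (g₁ t) (g₂ t) ≤ 3 * dist x y + 8 * δ := by
  have htx : t ≤ dist x z := ht.trans (min_le_left _ _)
  have hty : t ≤ dist y z := ht.trans (min_le_right _ _)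
  suffices dist (g₁ t) (g₂ t) ≤ dist x y + 8 * δ by linarith [dist_nonneg (x := x) (y := y)]
  by_cases hnear : min (dist x z - t) (dist y z - t) ≤ gromov z x y
  · have hclose := htri.dist_le_abs_sub_add_of_min_le_gromov hg₁.reverse hg₂.reverse
      ⟨sub_nonneg.2 htx, by linarith [dist_comm z x]⟩
      ⟨sub_nonneg.2 hty, by linarith [dist_comm z y]⟩ hnear
    simp only [sub_sub_cancel, sub_sub_sub_cancel_right] at hclose
    linarith [abs_dist_sub_le x y z]
  · obtain ⟨hfar₁, hfar₂⟩ := lt_min_iff.1 (not_le.1 hnear)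
    obtain ⟨h, hh⟩ := hgeo x y
    refine htri.dist_le_dist_add_of_le_gromov hg₁ hg₂ hh ht0 ?_ ?_
    · linarith [gromov_add_gromov x y z]
    · linarith [gromov_add_gromov y x z, gromov_comm z x y]
end

section
/- Let δ ≥ 0 and let X be a geodesic metric space satisfying the 4δ-tripod condition. Let x, y ∈ X and let g₁ : [0,∞) → X and g₂ : [0,∞) → X be geodesic rays with g₁(0) = x and g₂(0) = y such that (g₁(s)|g₂(s))_x → ∞ as s → ∞ (i.e. the two rays converge to the same point of the Gromov boundary). Then for every t ≥ 0 one has d(g₁(t), g₂(t)) ≤ 3·d(x,y) + 8δ. -/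
open Filter MeasureTheory Set

/-! Let `D = d(x, y)`. For `t ≤ D` the bound `d(g₁ t, g₂ t) ≤ 2t + D` suffices. For `t > D`, pick
`s` with `(g₁ s | g₂ s)_x ≥ t` and `s ≥ t + D`, and a geodesic `h` from `x` to `b = g₂ s`.
The tripod condition at `x` puts `h t` within `4δ` of `g₁ t`; the tripod condition at `b`, applied
to the reversals of `h` and of `g₂` on `[0, s]`, puts `h t` within `4δ` of `g₂ (s - d(x, b) + t)`,
which is within `|s - d(x, b)| ≤ D` of `g₂ t`. -/

section

variable {X : Type*} [MetricSpace X]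

namespace IsGeodesicOn

variable {g : ℝ → X}

lemma dist_zero_of_Ici (hg : IsGeodesicOn g (Ici 0)) {s : ℝ} (hs : 0 ≤ s) :
    dist (g 0) (g s) = s := by
  rw [hg 0 self_mem_Ici s hs, zero_sub, abs_neg, abs_of_nonneg hs]

lemma geodesicFromTo_of_Ici (hg : IsGeodesicOn g (Ici 0)) {s : ℝ} (hs : 0 ≤ s) :
    GeodesicFromTo g (g 0) (g s) :=
  ⟨fun u hu v hv => hg u hu.1 v hv.1, rfl, by rw [hg.dist_zero_of_Ici hs]⟩

lemma dist_le_of_Ici {g' : ℝ → X} (hg : IsGeodesicOn g (Ici 0)) (hg' : IsGeodesicOn g' (Ici 0))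
    {t : ℝ} (ht : 0 ≤ t) : dist (g t) (g' t) ≤ dist (g 0) (g' 0) + 2 * t := by
  calc dist (g t) (g' t) ≤ dist (g t) (g 0) + dist (g 0) (g' 0) + dist (g' 0) (g' t) :=
        dist_triangle4 _ _ _ _
    _ = dist (g 0) (g' 0) + 2 * t := by
        rw [dist_comm (g t), hg.dist_zero_of_Ici ht, hg'.dist_zero_of_Ici ht]; ring

end IsGeodesicOn

lemma GeodesicFromTo.reverse_s6 {g : ℝ → X} {x y : X} (hg : GeodesicFromTo g x y) :
    GeodesicFromTo (fun u => g (dist x y - u)) y x := by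
  obtain ⟨hiso, hg0, hgy⟩ := hg
  have hmem : ∀ u ∈ Icc 0 (dist y x), dist x y - u ∈ Icc 0 (dist x y) := by
    rw [dist_comm y x]
    exact fun u hu => ⟨by linarith [hu.2], by linarith [hu.1]⟩
  refine ⟨fun u hu v hv => ?_, by simpa using hgy, by simpa [dist_comm y x] using hg0⟩
  rw [hiso _ (hmem u hu) _ (hmem v hv), sub_sub_sub_cancel_left, abs_sub_comm]

theorem TripodCond.dist_le_of_le_gromov {δ : ℝ} (htri : TripodCond X δ) (hgeo : GeodesicSpace X)
    {g₁ g₂ : ℝ → X} (hg₁ : IsGeodesicOn g₁ (Ici 0)) (hg₂ : IsGeodesicOn g₂ (Ici 0)) {s t : ℝ}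
    (ht : dist (g₁ 0) (g₂ 0) ≤ t) (hs : t + dist (g₁ 0) (g₂ 0) ≤ s)
    (hgr : t ≤ gromov (g₁ 0) (g₁ s) (g₂ s)) :
    dist (g₁ t) (g₂ t) ≤ dist (g₁ 0) (g₂ 0) + 8 * δ := by
  set x := g₁ 0
  set y := g₂ 0
  set b := g₂ s
  have hD : 0 ≤ dist x y := dist_nonneg
  have hs0 : 0 ≤ s := by linarith
  have hyb : dist y b = s := hg₂.dist_zero_of_Ici hs0
  have hxb_ge : s - dist x y ≤ dist x b := by linarith [dist_triangle y x b, dist_comm x y]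
  have hxb_le : dist x b ≤ s + dist x y := by linarith [dist_triangle x y b]
  obtain ⟨h, hh⟩ := hgeo x b
  have near_x : dist (g₁ t) (h t) ≤ 4 * δ :=
    htri _ _ _ _ _ (hg₁.geodesicFromTo_of_Ici hs0) hh t (by linarith) hgr
  have near_b : dist (h t) (g₂ (s - (dist x b - t))) ≤ 4 * δ := by
    have := htri b x y _ _ hh.reverse_s6 (hg₂.geodesicFromTo_of_Ici hs0).reverse_s6 (dist x b - t)
      (by linarith) (by unfold gromov; linarith [dist_comm b y])
    simpa only [sub_sub_cancel, hg₂.dist_zero_of_Ici hs0] using this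
  have along_g₂ : dist (g₂ (s - (dist x b - t))) (g₂ t) ≤ dist x y := by
    rw [hg₂ (s - (dist x b - t)) (mem_Ici.mpr (by linarith)) t (mem_Ici.mpr (by linarith)),
      abs_sub_le_iff]
    constructor <;> linarith
  calc dist (g₁ t) (g₂ t)
      ≤ dist (g₁ t) (h t) + dist (h t) (g₂ (s - (dist x b - t)))
          + dist (g₂ (s - (dist x b - t))) (g₂ t) := dist_triangle4 _ _ _ _
    _ ≤ dist x y + 8 * δ := by linarith

end

/-- Theorem: two geodesic rays converging to the same Gromov boundary point
fellow-travel with error `3·d(x,y) + 8δ`. -/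
theorem statement6 {X : Type*} [MetricSpace X] (δ : ℝ) (hδ : 0 ≤ δ)
    (hgeo : GeodesicSpace X) (htri : TripodCond X δ)
    (x y : X) (g₁ g₂ : ℝ → X)
    (hg₁ : IsGeodesicOn g₁ (Set.Ici 0)) (hg₁0 : g₁ 0 = x)
    (hg₂ : IsGeodesicOn g₂ (Set.Ici 0)) (hg₂0 : g₂ 0 = y)
    (hconv : Filter.Tendsto (fun s : ℝ => gromov x (g₁ s) (g₂ s)) atTop atTop)
    (t : ℝ) (ht : 0 ≤ t) :
    dist (g₁ t) (g₂ t) ≤ 3 * dist x y + 8 * δ := by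
  subst hg₁0 hg₂0
  rcases le_total t (dist (g₁ 0) (g₂ 0)) with hsmall | hlarge
  · linarith [hg₁.dist_le_of_Ici hg₂ ht]
  · obtain ⟨s, hs, hgr⟩ :=
      ((eventually_ge_atTop (t + dist (g₁ 0) (g₂ 0))).and (hconv.eventually_ge_atTop t)).exists
    linarith [htri.dist_le_of_le_gromov hgeo hg₁ hg₂ hlarge hs hgr,
      dist_nonneg (x := g₁ 0) (y := g₂ 0)]
end

section
/- For every δ ≥ 0 there exists a constant κ ≥ 0 depending only on δ such that the following holds. Let X be a geodesic metric space in which geodesic triangles are δ-thin, let γ₀ : [0,∞) → X be a geodesic ray with Busemann function b, let x, y ∈ X, and suppose there are geodesics σ_x : (−∞, 0] → X with σ_x(0) = x and σ_y : (−∞, 0] → X with σ_y(0) = y such that (σ_x(−n)|γ₀(n))_{γ₀(0)} → ∞ and (σ_y(−n)|γ₀(n))_{γ₀(0)} → ∞ as n → ∞ (both geodesics emanate from the boundary point ω of γ₀). Then for every geodesic g : [0, d(x,y)] → X from x to y, |(x|y)_b − inf_{t ∈ [0, d(x,y)]} b(g(t))| ≤ κ. -/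
open Filter MeasureTheory Set

/-- Theorem: `(x|y)_b` agrees, up to an additive constant `κ = κ(δ)`, with the infimum
of `b` along any geodesic from `x` to `y`, for points joined to the boundary point of
`γ₀` by geodesics. -/
theorem statement10 (δ : ℝ) (hδ : 0 ≤ δ) :
    ∃ κ : ℝ, 0 ≤ κ ∧
      ∀ (X : Type) [MetricSpace X] (γ₀ : ℝ → X) (b : X → ℝ),
        GeodesicSpace X →
        ThinTriangles X δ →
        IsGeodesicOn γ₀ (Set.Ici 0) →
        (∀ x : X, Tendsto (fun t : ℝ => dist (γ₀ t) x - t) atTop (nhds (b x))) →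
        ∀ (x y : X) (σx σy : ℝ → X),
          IsGeodesicOn σx (Set.Iic 0) → σx 0 = x →
          IsGeodesicOn σy (Set.Iic 0) → σy 0 = y →
          Tendsto (fun n : ℕ => gromov (γ₀ 0) (σx (-(n : ℝ))) (γ₀ (n : ℝ))) atTop atTop →
          Tendsto (fun n : ℕ => gromov (γ₀ 0) (σy (-(n : ℝ))) (γ₀ (n : ℝ))) atTop atTop →
          ∀ g : ℝ → X, GeodesicFromTo g x y →
            |gromovB b x y - sInf ((fun t => b (g t)) '' Set.Icc (0:ℝ) (dist x y))| ≤ κ := by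

  refine ⟨2*δ, by linarith, ?_⟩
  intro X _ γ₀ b hgeo hthin hγ hb x y σx σy _ _ _ _ _ _ g hg
  -- b is 1-Lipschitz
  have hlip : ∀ u v : X, b u ≤ b v + dist u v := by
    intro u v
    have hle : ∀ t : ℝ, dist (γ₀ t) u - t ≤ (dist (γ₀ t) v - t) + dist u v := by
      intro t
      have h := dist_triangle (γ₀ t) v u
      rw [dist_comm v u] at h; linarith
    exact le_of_tendsto_of_tendsto' (hb u) ((hb v).add_const (dist u v)) hle
  -- b q ≤ dist (γ₀ T) q - T for T ≥ 0
  have hmono : ∀ (q : X) (T : ℝ), 0 ≤ T → b q ≤ dist (γ₀ T) q - T := by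
    intro q T hT
    refine le_of_tendsto (hb q) ?_
    filter_upwards [eventually_ge_atTop T] with t ht
    have h1 : dist (γ₀ t) q ≤ dist (γ₀ t) (γ₀ T) + dist (γ₀ T) q := dist_triangle _ _ _
    have h2 : dist (γ₀ t) (γ₀ T) = |t - T| := hγ t (le_trans hT ht) T hT
    rw [abs_of_nonneg (by linarith)] at h2
    linarith
  set L := dist x y with hL
  have hL0 : 0 ≤ L := dist_nonneg
  obtain ⟨hgiso, hg0, hgL⟩ := hg
  have hdx : ∀ t ∈ Set.Icc (0:ℝ) L, dist x (g t) = t := by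
    intro t ht
    have := hgiso 0 ⟨le_refl _, hL0⟩ t ht
    rw [hg0] at this
    rw [this, abs_of_nonpos (by linarith [ht.1])]; ring
  have hdy : ∀ t ∈ Set.Icc (0:ℝ) L, dist y (g t) = L - t := by
    intro t ht
    have := hgiso L ⟨hL0, le_refl _⟩ t ht
    rw [hgL] at this
    rw [this, abs_of_nonneg (by linarith [ht.2])]
  -- lower bound
  have hlow : ∀ t ∈ Set.Icc (0:ℝ) L, gromovB b x y ≤ b (g t) := by
    intro t ht
    have h1 : b x ≤ b (g t) + t := by
      have := hlip x (g t); rw [hdx t ht] at this; exact this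
    have h2 : b y ≤ b (g t) + (L - t) := by
      have := hlip y (g t); rw [hdy t ht] at this; exact this
    simp only [gromovB, ← hL]
    linarith
  have hbxy : |b x - b y| ≤ L := by
    rw [abs_le]
    have h1 := hlip x y
    have h2 := hlip y x
    rw [dist_comm y x] at h2
    constructor <;> linarith
  set t₀ := (b x - b y + L) / 2 with ht₀def
  have ht₀ : t₀ ∈ Set.Icc (0:ℝ) L := by
    rw [abs_le] at hbxy
    constructor
    · simp only [ht₀def]; linarith [hbxy.1]
    · simp only [ht₀def]; linarith [hbxy.2]
  -- upper bound at the balance point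
  have hup : b (g t₀) ≤ gromovB b x y + 2*δ := by
    refine le_of_forall_pos_le_add ?_
    intro ε hε
    have hx' : ∀ᶠ T in atTop, dist (γ₀ T) x - T ≤ b x + ε :=
      (hb x).eventually_le_const (lt_add_of_pos_right _ hε)
    have hy' : ∀ᶠ T in atTop, dist (γ₀ T) y - T ≤ b y + ε :=
      (hb y).eventually_le_const (lt_add_of_pos_right _ hε)
    obtain ⟨T, hT0, hTx, hTy⟩ :=
      ((eventually_ge_atTop (0:ℝ)).and (hx'.and hy')).exists
    obtain ⟨g₂, hg₂iso, hg₂0, hg₂e⟩ := hgeo x (γ₀ T)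
    obtain ⟨g₃, hg₃iso, hg₃0, hg₃e⟩ := hgeo y (γ₀ T)
    obtain ⟨H1, -, -⟩ := hthin x y (γ₀ T) g g₂ g₃ ⟨hgiso, hg0, hgL⟩
      ⟨hg₂iso, hg₂0, hg₂e⟩ ⟨hg₃iso, hg₃0, hg₃e⟩
    obtain ⟨p, hp, hpd⟩ := H1 t₀ ht₀
    have hbp : b (g t₀) ≤ b p + δ := le_trans (hlip (g t₀) p) (by linarith)
    rcases hp with ⟨s, hs, rfl⟩ | ⟨s, hs, rfl⟩
    · -- p on side from x to γ₀ T
      have hxq : dist x (g₂ s) = s := by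
        have := hg₂iso 0 ⟨le_refl _, dist_nonneg⟩ s hs
        rw [hg₂0] at this
        rw [this, abs_of_nonpos (by linarith [hs.1])]; ring
      have hqz : dist (γ₀ T) (g₂ s) = dist x (γ₀ T) - s := by
        have := hg₂iso (dist x (γ₀ T)) ⟨dist_nonneg, le_refl _⟩ s hs
        rw [hg₂e] at this
        rw [this, abs_of_nonneg (by linarith [hs.2])]
      have hbq : b (g₂ s) ≤ dist x (γ₀ T) - s - T := by
        have := hmono (g₂ s) T hT0
        rw [hqz] at this; linarith
      have hsge : t₀ - δ ≤ s := by
        have h := dist_triangle x (g₂ s) (g t₀)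
        rw [hdx t₀ ht₀, hxq, dist_comm (g₂ s) (g t₀)] at h
        linarith
      rw [dist_comm] at hTx
      have hbal : b x - t₀ = gromovB b x y := by
        simp only [gromovB, ← hL, ht₀def]; ring
      linarith
    · -- p on side from y to γ₀ T
      have hyq : dist y (g₃ s) = s := by
        have := hg₃iso 0 ⟨le_refl _, dist_nonneg⟩ s hs
        rw [hg₃0] at this
        rw [this, abs_of_nonpos (by linarith [hs.1])]; ring
      have hqz : dist (γ₀ T) (g₃ s) = dist y (γ₀ T) - s := by
        have := hg₃iso (dist y (γ₀ T)) ⟨dist_nonneg, le_refl _⟩ s hs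
        rw [hg₃e] at this
        rw [this, abs_of_nonneg (by linarith [hs.2])]
      have hbq : b (g₃ s) ≤ dist y (γ₀ T) - s - T := by
        have := hmono (g₃ s) T hT0
        rw [hqz] at this; linarith
      have hsge : (L - t₀) - δ ≤ s := by
        have h := dist_triangle y (g₃ s) (g t₀)
        rw [hdy t₀ ht₀, hyq, dist_comm (g₃ s) (g t₀)] at h
        linarith
      rw [dist_comm] at hTy
      have hbal : b y - (L - t₀) = gromovB b x y := by
        simp only [gromovB, ← hL, ht₀def]; ring
      linarith
  -- conclude via sInf
  have hne : ((fun t => b (g t)) '' Set.Icc (0:ℝ) L).Nonempty :=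
    ⟨b (g 0), ⟨0, ⟨le_refl _, hL0⟩, rfl⟩⟩
  have hbdd : BddBelow ((fun t => b (g t)) '' Set.Icc (0:ℝ) L) := by
    refine ⟨gromovB b x y, ?_⟩
    rintro z ⟨t, ht, rfl⟩
    exact hlow t ht
  have h1 : gromovB b x y ≤ sInf ((fun t => b (g t)) '' Set.Icc (0:ℝ) L) := by
    refine le_csInf hne ?_
    rintro z ⟨t, ht, rfl⟩
    exact hlow t ht
  have h2 : sInf ((fun t => b (g t)) '' Set.Icc (0:ℝ) L) ≤ b (g t₀) :=
    csInf_le hbdd ⟨t₀, ht₀, rfl⟩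
  rw [abs_le]
  constructor <;> linarith
end

section
/- For all δ ≥ 0 and K ≥ 0 there exists a constant c ≥ 0 depending only on δ and K such that the following holds. Let X be a geodesic metric space in which geodesic triangles are δ-thin, let γ₀ : [0,∞) → X be a geodesic ray with Busemann function b, and suppose X satisfies the interior K-rough-starlikeness condition with respect to γ₀. Then for all x, y ∈ X and every geodesic g from x to y there exist t₋ ≤ 0 ≤ t₊ with t₊ − t₋ = d(x,y) and an isometric parametrization η : [t₋, t₊] → X of g with η(t₋) = x and η(t₊) = y such that |b(η(t)) − (|t| + (x|y)_b)| ≤ c for all t ∈ [t₋, t₊] (a parametrization of g that is c-adapted to b). -/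
open Filter MeasureTheory Set

/-- Theorem: under rough starlikeness, every geodesic admits a parametrization that is
`c`-adapted to the Busemann function `b`, with `c = c(δ, K)`. -/
theorem statement11 (δ K : ℝ) (hδ : 0 ≤ δ) (hK : 0 ≤ K) :
    ∃ c : ℝ, 0 ≤ c ∧
      ∀ (X : Type) [MetricSpace X] (γ₀ : ℝ → X) (b : X → ℝ),
        GeodesicSpace X →
        ThinTriangles X δ →
        IsGeodesicOn γ₀ (Set.Ici 0) →
        (∀ x : X, Tendsto (fun t : ℝ => dist (γ₀ t) x - t) atTop (nhds (b x))) →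
        RoughStarlikeInt γ₀ K →
        ∀ (x y : X) (g : ℝ → X), GeodesicFromTo g x y →
          ∃ t₁ t₂ : ℝ, t₁ ≤ 0 ∧ 0 ≤ t₂ ∧ t₂ - t₁ = dist x y ∧
            ∀ t ∈ Set.Icc t₁ t₂,
              |b (g (t - t₁)) - (|t| + gromovB b x y)| ≤ c := by
  refine ⟨2 * δ, by linarith, ?_⟩
  intro X _ γ₀ b hX hthin hγ hb hstar x y g hg
  -- b is 1-Lipschitz
  have hlip : ∀ u v : X, b u - b v ≤ dist u v := by
    intro u v
    have h1 : Tendsto (fun T : ℝ => (dist (γ₀ T) u - T) - (dist (γ₀ T) v - T))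
        atTop (nhds (b u - b v)) := (hb u).sub (hb v)
    refine le_of_tendsto' h1 fun T => ?_
    have h2 := dist_triangle (γ₀ T) v u
    have h3 : dist v u = dist u v := dist_comm v u
    linarith
  obtain ⟨hgiso, hg0, hgd⟩ := hg
  have hd0 : (0:ℝ) ≤ dist x y := dist_nonneg
  -- key pointwise inequality from thinness
  have key : ∀ s ∈ Set.Icc (0:ℝ) (dist x y), ∀ w : X,
      dist w (g s) ≤ max (dist w x - s) (dist w y - (dist x y - s)) + 2 * δ := by
    intro s hs w
    obtain ⟨g₂, hg₂⟩ := hX x w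
    obtain ⟨g₃, hg₃⟩ := hX y w
    obtain ⟨p, hp, hdp⟩ :=
      (hthin x y w g g₂ g₃ ⟨hgiso, hg0, hgd⟩ hg₂ hg₃).1 s hs
    have hsx : dist x (g s) = s := by
      have := hgiso 0 ⟨le_refl 0, hd0⟩ s hs
      rw [hg0] at this
      rw [this, zero_sub, abs_neg, abs_of_nonneg hs.1]
    have hsy : dist y (g s) = dist x y - s := by
      have := hgiso (dist x y) ⟨hd0, le_refl _⟩ s hs
      rw [hgd] at this
      rw [this, abs_of_nonneg (by linarith [hs.2])]
    rcases hp with ⟨u, hu, rfl⟩ | ⟨u, hu, rfl⟩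
    · obtain ⟨h₂iso, h₂0, h₂e⟩ := hg₂
      have hxp : dist x (g₂ u) = u := by
        have := h₂iso 0 ⟨le_refl 0, dist_nonneg⟩ u hu
        rw [h₂0] at this
        rw [this, zero_sub, abs_neg, abs_of_nonneg hu.1]
      have hwp : dist w (g₂ u) = dist x w - u := by
        have := h₂iso (dist x w) ⟨dist_nonneg, le_refl _⟩ u hu
        rw [h₂e] at this
        rw [this, abs_of_nonneg (by linarith [hu.2])]
      have h4 : s ≤ u + δ := by
        have := dist_triangle x (g₂ u) (g s)
        have h5 : dist (g₂ u) (g s) ≤ δ := by rw [dist_comm]; exact hdp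
        linarith [hsx ▸ this]
      have h6 := dist_triangle w (g₂ u) (g s)
      have h5 : dist (g₂ u) (g s) ≤ δ := by rw [dist_comm]; exact hdp
      have h7 : dist x w = dist w x := dist_comm x w
      have := le_max_left (dist w x - s) (dist w y - (dist x y - s))
      linarith
    · obtain ⟨h₃iso, h₃0, h₃e⟩ := hg₃
      have hyp : dist y (g₃ u) = u := by
        have := h₃iso 0 ⟨le_refl 0, dist_nonneg⟩ u hu
        rw [h₃0] at this
        rw [this, zero_sub, abs_neg, abs_of_nonneg hu.1]
      have hwp : dist w (g₃ u) = dist y w - u := by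
        have := h₃iso (dist y w) ⟨dist_nonneg, le_refl _⟩ u hu
        rw [h₃e] at this
        rw [this, abs_of_nonneg (by linarith [hu.2])]
      have h4 : dist x y - s ≤ u + δ := by
        have := dist_triangle y (g₃ u) (g s)
        have h5 : dist (g₃ u) (g s) ≤ δ := by rw [dist_comm]; exact hdp
        linarith [hsy ▸ this]
      have h6 := dist_triangle w (g₃ u) (g s)
      have h5 : dist (g₃ u) (g s) ≤ δ := by rw [dist_comm]; exact hdp
      have h7 : dist y w = dist w y := dist_comm y w
      have := le_max_right (dist w x - s) (dist w y - (dist x y - s))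
      linarith
  -- pass to the limit: upper bound for b on the geodesic
  have main : ∀ s ∈ Set.Icc (0:ℝ) (dist x y),
      b (g s) ≤ max (b x - s) (b y - (dist x y - s)) + 2 * δ := by
    intro s hs
    have hT : Tendsto (fun T : ℝ =>
        max (dist (γ₀ T) x - T - s) (dist (γ₀ T) y - T - (dist x y - s)) + 2 * δ)
        atTop (nhds (max (b x - s) (b y - (dist x y - s)) + 2 * δ)) :=
      (((hb x).sub_const s).max ((hb y).sub_const (dist x y - s))).add_const (2 * δ)
    refine le_of_tendsto_of_tendsto' (hb (g s)) hT fun T => ?_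
    have h := key s hs (γ₀ T)
    have e1 : dist (γ₀ T) x - s = (dist (γ₀ T) x - T - s) + T := by ring
    have e2 : dist (γ₀ T) y - (dist x y - s) =
        (dist (γ₀ T) y - T - (dist x y - s)) + T := by ring
    rw [e1, e2, max_add_add_right] at h
    linarith
  -- choose the parametrization
  have hba : b y - b x ≤ dist x y := by
    have := hlip y x
    rwa [dist_comm] at this
  have hab : b x - b y ≤ dist x y := hlip x y
  refine ⟨(b y - b x - dist x y) / 2, (b y - b x + dist x y) / 2,
    by linarith, by linarith, by ring, ?_⟩
  intro t ht
  obtain ⟨ht1, ht2⟩ := ht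
  have hs : t - (b y - b x - dist x y) / 2 ∈ Set.Icc (0:ℝ) (dist x y) :=
    Set.mem_Icc.mpr ⟨by linarith, by linarith⟩
  generalize hsdef : t - (b y - b x - dist x y) / 2 = s at hs ⊢
  have hsx : dist x (g s) = s := by
    have := hgiso 0 ⟨le_refl 0, hd0⟩ s hs
    rw [hg0] at this
    rw [this, zero_sub, abs_neg, abs_of_nonneg hs.1]
  have hsy : dist y (g s) = dist x y - s := by
    have := hgiso (dist x y) ⟨hd0, le_refl _⟩ s hs
    rw [hgd] at this
    rw [this, abs_of_nonneg (by linarith [hs.2])]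
  have low1 : b x - s ≤ b (g s) := by have := hlip x (g s); rw [hsx] at this; linarith
  have low2 : b y - (dist x y - s) ≤ b (g s) := by
    have := hlip y (g s); rw [hsy] at this; linarith
  have up := main s hs
  simp only [gromovB]
  rw [abs_le]
  constructor
  · rcases abs_cases t with ⟨ha, _⟩ | ⟨ha, _⟩
    · rw [ha]; linarith
    · rw [ha]; linarith
  · rcases max_cases (b x - s) (b y - (dist x y - s)) with ⟨hm, hm'⟩ | ⟨hm, hm'⟩ <;>
      rw [hm] at up <;>
      rcases abs_cases t with ⟨ha, ha'⟩ | ⟨ha, ha'⟩ <;> rw [ha] <;> linarith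
end

section
/- Let δ ≥ 0, let X be a geodesic metric space, let γ₀ : [0,∞) → X be a geodesic ray with Busemann function b, and let ε > 0. Let γ : ℝ → X be a geodesic line such that |b(γ(t)) − t| ≤ 144δ for all t ∈ ℝ. Then: (i) for every s ∈ ℝ, e^{−144δε}·ε⁻¹·e^{−εs} ≤ ∫_s^∞ e^{−ε·b(γ(t))} dt ≤ e^{144δε}·ε⁻¹·e^{−εs}; and (ii) if in addition ρ_ε is admissible with constant M ≥ 1, then d_ε(γ(s), γ(0)) → ∞ as s → −∞; in particular (X, d_ε) is unbounded. -/
open Filter MeasureTheory Set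

/-!
On the geodesic line the density `e^{-εb(γ t)}` is squeezed between `e^{∓144δε} e^{-εt}`, so
its tail integrals are those of `e^{-εt}` up to the factors `e^{±144δε}`. Running `γ`
backwards, the `ρ_ε`-length of the geodesic segment from `γ s` to `γ 0` therefore grows like
`e^{-εs}`, and admissibility turns this length into a lower bound `M⁻¹ ·` length for
`d_ε(γ s, γ 0)`.
-/

theorem LipschitzWith.of_tendsto {ι α : Type*} [PseudoMetricSpace α] {l : Filter ι} [l.NeBot]
    {F : ι → α → ℝ} {f : α → ℝ} {K : NNReal} (hF : ∀ i, LipschitzWith K (F i))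
    (hf : ∀ x, Tendsto (fun i => F i x) l (nhds (f x))) : LipschitzWith K f :=
  LipschitzWith.of_dist_le_mul fun x y =>
    le_of_tendsto ((hf x).dist (hf y)) (Eventually.of_forall fun i => (hF i).dist_le_mul x y)

theorem lipschitzWith_one_of_tendsto_dist_sub {X : Type*} [MetricSpace X] {p : ℝ → X}
    {b : X → ℝ} (hb : ∀ x, Tendsto (fun t => dist (p t) x - t) atTop (nhds (b x))) :
    LipschitzWith 1 b := by
  refine LipschitzWith.of_tendsto (fun t => LipschitzWith.of_dist_le_mul fun x y => ?_) hb
  rw [dist_sub_right, NNReal.coe_one, one_mul]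
  exact dist_dist_dist_le_right _ _ _

section GeodesicLine

variable {X : Type*} [MetricSpace X] {γ : ℝ → X}

theorem IsGeodesicOn.lipschitzWith_one (hγ : IsGeodesicOn γ univ) : LipschitzWith 1 γ :=
  LipschitzWith.of_dist_le_mul fun u v => by
    rw [hγ u trivial v trivial, NNReal.coe_one, one_mul, Real.dist_eq]

theorem IsGeodesicOn.geodesicFromTo_shift (hγ : IsGeodesicOn γ univ) {s r : ℝ} (hsr : s ≤ r) :
    GeodesicFromTo (fun u => γ (s + u)) (γ s) (γ r) := by
  have hdist : dist (γ s) (γ r) = r - s := by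
    rw [hγ s trivial r trivial, abs_sub_comm, abs_of_nonneg (sub_nonneg.2 hsr)]
  refine ⟨fun u _ v _ => ?_, by simp, by simp [hdist]⟩
  rw [hγ (s + u) trivial (s + v) trivial, add_sub_add_left_eq_sub]

theorem Admissible.intervalIntegral_le_confDist {ρ : X → ℝ} {M : ℝ} (hρ : Admissible ρ M)
    (hγ : IsGeodesicOn γ univ) {s r : ℝ} (hsr : s ≤ r) :
    ∫ t in s..r, ρ (γ t) ≤ M * confDist ρ (γ s) (γ r) := by
  have h := hρ _ _ _ (hγ.geodesicFromTo_shift hsr)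
  rwa [hγ s trivial r trivial, abs_sub_comm, abs_of_nonneg (sub_nonneg.2 hsr),
    intervalIntegral.integral_comp_add_left (fun t => ρ (γ t)), add_zero, add_sub_cancel] at h

end GeodesicLine

theorem integral_Ioi_exp_neg_mul {ε : ℝ} (hε : 0 < ε) (s : ℝ) :
    ∫ t in Ioi s, Real.exp (-ε * t) = ε⁻¹ * Real.exp (-(ε * s)) := by
  rw [integral_exp_mul_Ioi (neg_lt_zero.2 hε), neg_mul, div_neg, neg_div, neg_neg, div_eq_inv_mul]

section ExpDensity

variable {φ : ℝ → ℝ} {C ε : ℝ}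

theorem exp_neg_mul_le_of_abs_sub_le {a t : ℝ} (hε : 0 ≤ ε) (h : |a - t| ≤ C) :
    Real.exp (-(C * ε)) * Real.exp (-ε * t) ≤ Real.exp (-ε * a) ∧
      Real.exp (-ε * a) ≤ Real.exp (C * ε) * Real.exp (-ε * t) := by
  obtain ⟨hlo, hhi⟩ := abs_le.1 h
  simp only [← Real.exp_add, Real.exp_le_exp]
  constructor <;> nlinarith

theorem integrableOn_Ioi_exp_neg_mul_comp (hφ : Measurable φ) (hC : ∀ t, |φ t - t| ≤ C)
    (hε : 0 < ε) (s : ℝ) : IntegrableOn (fun t => Real.exp (-ε * φ t)) (Ioi s) := by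
  refine Integrable.mono' ((exp_neg_integrableOn_Ioi s hε).const_mul (Real.exp (C * ε)))
    (by fun_prop) (Eventually.of_forall fun t => ?_)
  rw [Real.norm_of_nonneg (Real.exp_pos _).le]
  exact (exp_neg_mul_le_of_abs_sub_le hε.le (hC t)).2

theorem le_integral_Ioi_exp_neg_mul_comp (hφ : Measurable φ) (hC : ∀ t, |φ t - t| ≤ C)
    (hε : 0 < ε) (s : ℝ) :
    Real.exp (-(C * ε)) * ε⁻¹ * Real.exp (-(ε * s)) ≤ ∫ t in Ioi s, Real.exp (-ε * φ t) := by
  calc Real.exp (-(C * ε)) * ε⁻¹ * Real.exp (-(ε * s))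
      = ∫ t in Ioi s, Real.exp (-(C * ε)) * Real.exp (-ε * t) := by
        rw [integral_const_mul, integral_Ioi_exp_neg_mul hε, mul_assoc]
    _ ≤ ∫ t in Ioi s, Real.exp (-ε * φ t) :=
        setIntegral_mono_on ((exp_neg_integrableOn_Ioi s hε).const_mul _)
          (integrableOn_Ioi_exp_neg_mul_comp hφ hC hε s) measurableSet_Ioi
          fun t _ => (exp_neg_mul_le_of_abs_sub_le hε.le (hC t)).1

theorem integral_Ioi_exp_neg_mul_comp_le (hφ : Measurable φ) (hC : ∀ t, |φ t - t| ≤ C)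
    (hε : 0 < ε) (s : ℝ) :
    ∫ t in Ioi s, Real.exp (-ε * φ t) ≤ Real.exp (C * ε) * ε⁻¹ * Real.exp (-(ε * s)) := by
  calc ∫ t in Ioi s, Real.exp (-ε * φ t)
      ≤ ∫ t in Ioi s, Real.exp (C * ε) * Real.exp (-ε * t) :=
        setIntegral_mono_on (integrableOn_Ioi_exp_neg_mul_comp hφ hC hε s)
          ((exp_neg_integrableOn_Ioi s hε).const_mul _) measurableSet_Ioi
          fun t _ => (exp_neg_mul_le_of_abs_sub_le hε.le (hC t)).2
    _ = Real.exp (C * ε) * ε⁻¹ * Real.exp (-(ε * s)) := by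
        rw [integral_const_mul, integral_Ioi_exp_neg_mul hε, mul_assoc]

theorem tendsto_intervalIntegral_exp_neg_mul_comp_atBot (hφ : Measurable φ)
    (hC : ∀ t, |φ t - t| ≤ C) (hε : 0 < ε) :
    Tendsto (fun s => ∫ t in s..0, Real.exp (-ε * φ t)) atBot atTop := by
  have hexp : Tendsto (fun s => Real.exp (-(C * ε)) * ε⁻¹ * Real.exp (-(ε * s))) atBot atTop :=
    (Real.tendsto_exp_atTop.comp <| tendsto_neg_atBot_atTop.comp <|
      tendsto_id.const_mul_atBot hε).const_mul_atTop (by positivity)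
  refine tendsto_atTop_mono' atBot ?_
    (tendsto_atTop_add_const_right atBot (-∫ t in Ioi 0, Real.exp (-ε * φ t)) hexp)
  filter_upwards [eventually_le_atBot 0] with s hs
  rw [← intervalIntegral.integral_Ioi_sub_Ioi (integrableOn_Ioi_exp_neg_mul_comp hφ hC hε s) hs,
    ← sub_eq_add_neg]
  exact sub_le_sub_right (le_integral_Ioi_exp_neg_mul_comp hφ hC hε s) _

end ExpDensity

theorem statement12_general {X : Type*} [MetricSpace X] (δ : ℝ)
    (γ₀ : ℝ → X)
    (b : X → ℝ)
    (hb : ∀ x : X, Tendsto (fun t : ℝ => dist (γ₀ t) x - t) atTop (nhds (b x)))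
    (ε : ℝ) (hε : 0 < ε)
    (γ : ℝ → X) (hγ : IsGeodesicOn γ Set.univ)
    (hbγ : ∀ t : ℝ, |b (γ t) - t| ≤ 144 * δ) :
    (∀ s : ℝ,
      Real.exp (-(144 * δ * ε)) * ε⁻¹ * Real.exp (-(ε * s)) ≤
          (∫ t in Set.Ioi s, Real.exp (-ε * b (γ t))) ∧
      (∫ t in Set.Ioi s, Real.exp (-ε * b (γ t))) ≤
          Real.exp (144 * δ * ε) * ε⁻¹ * Real.exp (-(ε * s))) ∧
    (∀ M : ℝ, 1 ≤ M → Admissible (fun z => Real.exp (-ε * b z)) M →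
      Tendsto (fun s : ℝ => confDist (fun z => Real.exp (-ε * b z)) (γ s) (γ 0))
          atBot atTop ∧
      ∀ R : ℝ, ∃ p q : X, R < confDist (fun z => Real.exp (-ε * b z)) p q) := by
  have hbγ_meas : Measurable fun t => b (γ t) :=
    ((lipschitzWith_one_of_tendsto_dist_sub hb).continuous.comp
      hγ.lipschitzWith_one.continuous).measurable
  refine ⟨fun s => ⟨le_integral_Ioi_exp_neg_mul_comp hbγ_meas hbγ hε s,
    integral_Ioi_exp_neg_mul_comp_le hbγ_meas hbγ hε s⟩, fun M hM hadm => ?_⟩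
  have hM : 0 < M := one_pos.trans_le hM
  have hconf : Tendsto (fun s => confDist (fun z => Real.exp (-ε * b z)) (γ s) (γ 0))
      atBot atTop := by
    refine tendsto_atTop_mono' atBot ?_
      ((tendsto_intervalIntegral_exp_neg_mul_comp_atBot hbγ_meas hbγ hε).atTop_div_const hM)
    filter_upwards [eventually_le_atBot 0] with s hs
    rw [div_le_iff₀' hM]
    exact hadm.intervalIntegral_le_confDist hγ hs
  refine ⟨hconf, fun R => ?_⟩
  obtain ⟨s, hs⟩ := (hconf.eventually (eventually_gt_atTop R)).exists
  exact ⟨γ s, γ 0, hs⟩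

/-- Theorem: along a geodesic line on which `b(γ(t)) ≐ t`, the tail `ρ_ε`-lengths are
comparable to `ε⁻¹e^{-εs}`; under admissibility the uniformized space is unbounded. -/
theorem statement12 {X : Type*} [MetricSpace X] (δ : ℝ) (hδ : 0 ≤ δ)
    (hgeo : GeodesicSpace X)
    (γ₀ : ℝ → X) (hray : IsGeodesicOn γ₀ (Set.Ici 0))
    (b : X → ℝ)
    (hb : ∀ x : X, Tendsto (fun t : ℝ => dist (γ₀ t) x - t) atTop (nhds (b x)))
    (ε : ℝ) (hε : 0 < ε)
    (γ : ℝ → X) (hγ : IsGeodesicOn γ Set.univ)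
    (hbγ : ∀ t : ℝ, |b (γ t) - t| ≤ 144 * δ) :
    (∀ s : ℝ,
      Real.exp (-(144 * δ * ε)) * ε⁻¹ * Real.exp (-(ε * s)) ≤
          (∫ t in Set.Ioi s, Real.exp (-ε * b (γ t))) ∧
      (∫ t in Set.Ioi s, Real.exp (-ε * b (γ t))) ≤
          Real.exp (144 * δ * ε) * ε⁻¹ * Real.exp (-(ε * s))) ∧
    (∀ M : ℝ, 1 ≤ M → Admissible (fun z => Real.exp (-ε * b z)) M →
      Tendsto (fun s : ℝ => confDist (fun z => Real.exp (-ε * b z)) (γ s) (γ 0))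
          atBot atTop ∧
      ∀ R : ℝ, ∃ p q : X, R < confDist (fun z => Real.exp (-ε * b z)) p q) :=
  statement12_general δ γ₀ b hb ε hε γ hγ hbγ
end

section
/- Fix hyperbolic filling data for a metric space Z with parameters a, τ. If v = v₀, v₁, …, v_k = w is a walk of vertices with v_i ∼ v_{i+1} and h(v_{i+1}) = h(v_i) + 1 for all 0 ≤ i < k (an ascending vertical walk, so h(v) ≤ h(w)), then the underlying points satisfy d(v, w) ≤ 2τ·a^{h(v)}/(1 − a). -/
open Filter

/-- Hyperbolic filling data for a metric space `Z` with parameter `a`: a choice, for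
each `n : ℤ`, of a maximal `a^n`-separated subset `S n` of `Z`. -/
structure HypFilling (Z : Type*) [MetricSpace Z] (a : ℝ) where
  S : ℤ → Set Z
  separated : ∀ n : ℤ, ∀ x ∈ S n, ∀ y ∈ S n, x ≠ y → a ^ n ≤ dist x y
  maximal : ∀ (n : ℤ) (z : Z), ∃ x ∈ S n, dist z x < a ^ n

namespace HypFilling

variable {Z : Type*} [MetricSpace Z] {a : ℝ}

/-- The vertex set of the hyperbolic filling. -/
def Vertex (F : HypFilling Z a) : Type _ := {p : Z × ℤ // p.1 ∈ F.S p.2}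

/-- The height of a vertex. -/
def height {F : HypFilling Z a} (v : F.Vertex) : ℤ := v.1.2

/-- The underlying point in `Z` of a vertex. -/
def pt {F : HypFilling Z a} (v : F.Vertex) : Z := v.1.1

/-- Adjacency in the hyperbolic filling graph with dilation parameter `τ`: distinct
vertices of heights differing by at most `1` whose associated dilated balls meet. -/
def Adj {F : HypFilling Z a} (τ : ℝ) (v w : F.Vertex) : Prop :=
  v ≠ w ∧ |height v - height w| ≤ 1 ∧
    ∃ z : Z, dist z (pt v) < τ * a ^ height v ∧ dist z (pt w) < τ * a ^ height w

/-- `f 0, f 1, …, f k` is a walk in the filling graph. -/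
def IsWalk {F : HypFilling Z a} (τ : ℝ) (k : ℕ) (f : ℕ → F.Vertex) : Prop :=
  ∀ i < k, Adj τ (f i) (f (i + 1))

/-- Two vertices are joined by a walk. -/
def Joined {F : HypFilling Z a} (τ : ℝ) (v w : F.Vertex) : Prop :=
  ∃ (k : ℕ) (f : ℕ → F.Vertex), f 0 = v ∧ f k = w ∧ IsWalk τ k f

/-- The graph distance: the minimal number of edges of a walk joining `v` to `w`. -/
noncomputable def graphDist {F : HypFilling Z a} (τ : ℝ) (v w : F.Vertex) : ℕ :=
  sInf {k : ℕ | ∃ f : ℕ → F.Vertex, f 0 = v ∧ f k = w ∧ IsWalk τ k f}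

/-- The Gromov product `(v|w)_h` formed with heights and graph distances. -/
noncomputable def gpH {F : HypFilling Z a} (τ : ℝ) (v w : F.Vertex) : ℝ :=
  ((height v : ℝ) + (height w : ℝ) - (graphDist τ v w : ℝ)) / 2

/-- An ascending vertical walk from `u` to `v`. -/
def VertWalkUp {F : HypFilling Z a} (τ : ℝ) (u v : F.Vertex) : Prop :=
  ∃ (k : ℕ) (f : ℕ → F.Vertex), f 0 = u ∧ f k = v ∧
    ∀ i < k, Adj τ (f i) (f (i + 1)) ∧ height (f (i + 1)) = height (f i) + 1

/-- A cone point for the pair `{v, w}`: a vertex joined to each of `v` and `w` by a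
vertical walk, of height at most `min (height v) (height w)`. -/
def ConePoint {F : HypFilling Z a} (τ : ℝ) (u v w : F.Vertex) : Prop :=
  VertWalkUp τ u v ∧ VertWalkUp τ u w ∧ height u ≤ min (height v) (height w)

/-- A branch point for the pair `{v, w}`: a cone point of maximal height. -/
def BranchPoint {F : HypFilling Z a} (τ : ℝ) (u v w : F.Vertex) : Prop :=
  ConePoint τ u v w ∧ ∀ u' : F.Vertex, ConePoint τ u' v w → height u' ≤ height u

end HypFilling

open HypFilling

/-- Theorem: along an ascending vertical walk, the underlying points move at most
`2τ·a^{h(v)}/(1-a)` in `Z`. -/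
theorem statement13 {Z : Type*} [MetricSpace Z] (a τ : ℝ)
    (ha0 : 0 < a) (ha1 : a < 1) (hτ : max 3 (1 / (1 - a)) < τ)
    (F : HypFilling Z a) (k : ℕ) (f : ℕ → F.Vertex)
    (hadj : ∀ i < k, Adj τ (f i) (f (i + 1)))
    (hup : ∀ i < k, height (f (i + 1)) = height (f i) + 1) :
    dist (pt (f 0)) (pt (f k)) ≤ 2 * τ * a ^ height (f 0) / (1 - a) := by
  have hτ0 : (0:ℝ) < τ := lt_of_le_of_lt (le_trans (by norm_num) (le_max_left 3 (1/(1-a)))) hτ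
  have h1a : (0:ℝ) < 1 - a := by linarith
  have hh : ∀ i ≤ k, height (f i) = height (f 0) + i := by
    intro i hi
    induction i with
    | zero => simp
    | succ n ih =>
      have h := hup n (Nat.lt_of_succ_le hi)
      rw [h, ih (le_of_lt (Nat.lt_of_succ_le hi))]
      push_cast; ring
  have hstep : ∀ i < k, dist (pt (f i)) (pt (f (i+1))) ≤
      τ * a ^ height (f i) + τ * a ^ height (f (i+1)) := by
    intro i hi
    obtain ⟨_, _, z, hz1, hz2⟩ := hadj i hi
    calc dist (pt (f i)) (pt (f (i+1))) ≤ dist (pt (f i)) z + dist z (pt (f (i+1))) :=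
          dist_triangle _ _ _
    _ ≤ _ := by rw [dist_comm (pt (f i)) z]; exact add_le_add hz1.le hz2.le
  have main : ∀ j ≤ k, dist (pt (f 0)) (pt (f j)) ≤
      τ * (1+a) * a ^ height (f 0) * ∑ i ∈ Finset.range j, a ^ i := by
    intro j hj
    induction j with
    | zero => simp
    | succ n ih =>
      have hn : n < k := Nat.lt_of_succ_le hj
      have h1 := hstep n hn
      have hhn := hh n hn.le
      have hhn1 := hh (n+1) hj
      calc dist (pt (f 0)) (pt (f (n+1)))
          ≤ dist (pt (f 0)) (pt (f n)) + dist (pt (f n)) (pt (f (n+1))) := dist_triangle _ _ _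
      _ ≤ τ * (1+a) * a ^ height (f 0) * ∑ i ∈ Finset.range n, a ^ i +
            (τ * a ^ height (f n) + τ * a ^ height (f (n+1))) := add_le_add (ih hn.le) h1
      _ = τ * (1+a) * a ^ height (f 0) * ∑ i ∈ Finset.range (n+1), a ^ i := by
          rw [Finset.sum_range_succ, hhn, hhn1, zpow_add₀ (ne_of_gt ha0),
            zpow_add₀ (ne_of_gt ha0), zpow_natCast, zpow_natCast]
          ring
  have hpow : (0:ℝ) < a ^ height (f 0) := zpow_pos ha0 _
  have hsum : ∑ i ∈ Finset.range k, a ^ i ≤ 1 / (1 - a) := by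
    have key : (∑ i ∈ Finset.range k, a ^ i) * (1 - a) = 1 - a ^ k := by
      linear_combination -geom_sum_mul a k
    rw [le_div_iff₀ h1a, key]
    have hak : (0:ℝ) ≤ a ^ k := pow_nonneg ha0.le k
    linarith
  calc dist (pt (f 0)) (pt (f k)) ≤ τ * (1+a) * a ^ height (f 0) * ∑ i ∈ Finset.range k, a ^ i :=
        main k le_rfl
  _ ≤ τ * (1+a) * a ^ height (f 0) * (1 / (1 - a)) := by
      apply mul_le_mul_of_nonneg_left hsum
      positivity
  _ ≤ 2 * τ * a ^ height (f 0) / (1 - a) := by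
      rw [mul_one_div, div_le_div_iff₀ h1a h1a]
      nlinarith [mul_pos (mul_pos hτ0 hpow) h1a]
end

section
/- Fix hyperbolic filling data for a metric space Z with parameters a, τ. If v, w are distinct vertices with h(v) = h(w) = n and v ∼ w, then there exists a vertex u with h(u) = n − 1 such that u ∼ v and u ∼ w; in particular u is a branch point for {v, w}. -/
open Filter

open HypFilling

lemma vertwalk_height {Z : Type*} [MetricSpace Z] {a τ : ℝ} {F : HypFilling Z a}
    {u v : F.Vertex} (h : VertWalkUp τ u v) :
    height u ≤ height v ∧ (height u = height v → u = v) := by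
  obtain ⟨k, f, h0, hk, hstep⟩ := h
  have key : ∀ j ≤ k, height (f j) = height (f 0) + j := by
    intro j hj
    induction j with
    | zero => simp
    | succ i ih =>
      have h2 := (hstep i (by omega)).2
      rw [h2, ih (by omega)]
      push_cast; ring
  have hkey : height v = height u + k := by rw [← h0, ← hk, key k le_rfl]
  constructor
  · omega
  · intro heq
    have : (k : ℤ) = 0 := by omega
    have hk0 : k = 0 := by exact_mod_cast this
    rw [← h0, ← hk, hk0]

/-- Theorem: two distinct adjacent vertices of the same height `n` admit a common
neighbour at height `n - 1`, which is a branch point for the pair. -/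
theorem statement14 {Z : Type*} [MetricSpace Z] (a τ : ℝ)
    (ha0 : 0 < a) (ha1 : a < 1) (hτ : max 3 (1 / (1 - a)) < τ)
    (F : HypFilling Z a) (v w : F.Vertex) (n : ℤ)
    (hv : height v = n) (hw : height w = n) (hadj : Adj τ v w) :
    ∃ u : F.Vertex, height u = n - 1 ∧ Adj τ u v ∧ Adj τ u w ∧
      BranchPoint τ u v w := by
  obtain ⟨hvw, -, z0, hz0v, hz0w⟩ := hadj
  obtain ⟨x, hxS, hx⟩ := F.maximal (n - 1) (pt v)
  have htau3 : (3 : ℝ) < τ := lt_of_le_of_lt (le_max_left _ _) hτ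
  have h1a : 0 < 1 - a := by linarith
  have htau2 : 1 / (1 - a) < τ := lt_of_le_of_lt (le_max_right _ _) hτ
  have htaua : τ * a + 1 ≤ τ := by
    have : 1 < τ * (1 - a) := (div_lt_iff₀ h1a).mp htau2
    nlinarith
  have hpow : (0 : ℝ) < a ^ (n - 1) := zpow_pos ha0 _
  have hpown : (0 : ℝ) < a ^ n := zpow_pos ha0 _
  have hsplit : a ^ n = a ^ (n - 1) * a := by
    rw [← zpow_add_one₀ ha0.ne' (n - 1)]; norm_num
  set u : F.Vertex := ⟨(x, n - 1), hxS⟩ with hu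
  have hhu : height u = n - 1 := rfl
  have hptu : pt u = x := rfl
  have huv : u ≠ v := by
    intro h; apply (by omega : (n : ℤ) - 1 ≠ n); rw [← hhu, h, hv]
  have huw : u ≠ w := by
    intro h; apply (by omega : (n : ℤ) - 1 ≠ n); rw [← hhu, h, hw]
  have hAuv : Adj τ u v := by
    refine ⟨huv, by rw [hhu, hv]; simp, pt v, ?_, ?_⟩
    · rw [hptu, hhu]
      calc dist (pt v) x < a ^ (n - 1) := hx
        _ ≤ τ * a ^ (n - 1) := by nlinarith
    · rw [hv]; simp only [dist_self]; positivity
  have hAuw : Adj τ u w := by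
    refine ⟨huw, by rw [hhu, hw]; simp, z0, ?_, ?_⟩
    · rw [hptu, hhu]
      calc dist z0 x ≤ dist z0 (pt v) + dist (pt v) x := dist_triangle _ _ _
        _ < τ * a ^ n + a ^ (n - 1) := by rw [hv] at hz0v; linarith
        _ = (τ * a + 1) * a ^ (n - 1) := by rw [hsplit]; ring
        _ ≤ τ * a ^ (n - 1) := by nlinarith
    · simpa [hw] using hz0w
  have hWv : VertWalkUp τ u v := by
    refine ⟨1, fun i => if i = 0 then u else v, rfl, rfl, ?_⟩
    intro i hi
    have hi0 : i = 0 := by omega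
    subst hi0
    exact ⟨by simpa using hAuv, by simp [hhu, hv]⟩
  have hWw : VertWalkUp τ u w := by
    refine ⟨1, fun i => if i = 0 then u else w, rfl, rfl, ?_⟩
    intro i hi
    have hi0 : i = 0 := by omega
    subst hi0
    exact ⟨by simpa using hAuw, by simp [hhu, hw]⟩
  have hcone : ConePoint τ u v w := ⟨hWv, hWw, by rw [hhu, hv, hw]; omega⟩
  refine ⟨u, hhu, hAuv, hAuw, hcone, ?_⟩
  rintro u' ⟨hW1, hW2, hle⟩
  obtain ⟨hle1, heq1⟩ := vertwalk_height hW1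
  obtain ⟨hle2, heq2⟩ := vertwalk_height hW2
  rw [hhu]
  by_contra hcon
  push_neg at hcon
  simp only [hv, hw, min_self] at hle hle1 hle2
  have h1 : height u' = n := by omega
  have h2 : u' = v := heq1 (by rw [hv, h1])
  have h3 : u' = w := heq2 (by rw [hw, h1])
  exact hvw (h2 ▸ h3)
end

section
/- For all 0 < a < 1 and τ > max{3, 1/(1−a)} there exists a constant C ≥ 1 depending only on a and τ such that for every metric space Z and every choice of hyperbolic filling data with parameters a, τ, and for all vertices v, w, there exists a branch point u for the pair {v, w}, and every such branch point satisfies C⁻¹·(d(v,w) + a^{min{h(v), h(w)}}) ≤ a^{h(u)} ≤ C·(d(v,w) + a^{min{h(v), h(w)}}). Consequently any two vertices are joined by a walk, i.e. the graph is connected. -/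
open Filter

section Aux

open HypFilling

variable {Z : Type*} [MetricSpace Z] {a τ : ℝ} {F : HypFilling Z a}

lemma ne_of_height_ne {u v : F.Vertex} (h : height u ≠ height v) : u ≠ v :=
  fun e => h (by rw [e])

lemma adj_symm {u v : F.Vertex} (h : Adj τ u v) : Adj τ v u := by
  obtain ⟨h1, h2, z, h3, h4⟩ := h
  exact ⟨h1.symm, by rwa [abs_sub_comm], z, h4, h3⟩

lemma adj_dist {u v : F.Vertex} (h : Adj τ u v) :
    dist (pt u) (pt v) < τ * a ^ height u + τ * a ^ height v := by
  obtain ⟨-, -, z, h3, h4⟩ := h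
  calc dist (pt u) (pt v) ≤ dist z (pt u) + dist z (pt v) := dist_triangle_left _ _ _
  _ < _ := by linarith

lemma descend_step (ha0 : 0 < a) (hτ1 : 1 ≤ τ) (v : F.Vertex) :
    ∃ u : F.Vertex, Adj τ u v ∧ height u = height v - 1 ∧
      dist (pt v) (pt u) < a ^ (height v - 1) := by
  obtain ⟨x, hx, hdx⟩ := F.maximal (height v - 1) (pt v)
  refine ⟨⟨(x, height v - 1), hx⟩, ?_, rfl, hdx⟩
  refine ⟨ne_of_height_ne ?_, ?_, pt v, ?_, ?_⟩
  · show height v - 1 ≠ height v; omega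
  · show |height v - 1 - height v| ≤ 1; rw [abs_le]; omega
  · show dist (pt v) x < τ * a ^ (height v - 1)
    exact lt_of_lt_of_le hdx (le_mul_of_one_le_left (zpow_pos ha0 _).le hτ1)
  · rw [dist_self]; positivity

lemma vertWalkUp_cons {s u v : F.Vertex} (hadj : Adj τ s u) (hh : height u = height s + 1)
    (h : VertWalkUp τ u v) : VertWalkUp τ s v := by
  obtain ⟨k, f, h0, hk, hstep⟩ := h
  refine ⟨k + 1, fun i => match i with | 0 => s | (j+1) => f j, rfl, hk, ?_⟩
  intro i hi
  cases i with
  | zero =>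
    show Adj τ s (f 0) ∧ height (f 0) = height s + 1
    rw [h0]; exact ⟨hadj, hh⟩
  | succ j => exact hstep j (by omega)

lemma descend (ha0 : 0 < a) (ha1 : a < 1) (hτ1 : 1 ≤ τ) (v : F.Vertex) :
    ∀ k : ℕ, ∃ u : F.Vertex, VertWalkUp τ u v ∧ height u = height v - k ∧
      dist (pt u) (pt v) ≤ (a ^ height u - a ^ height v) / (1 - a) := by
  intro k
  induction k with
  | zero =>
    exact ⟨v, ⟨0, fun _ => v, rfl, rfl, fun i hi => absurd hi (Nat.not_lt_zero i)⟩,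
      by simp, by simp⟩
  | succ k ih =>
    obtain ⟨u, hwalk, hh, hd⟩ := ih
    obtain ⟨u', hadj, hh', hd'⟩ := descend_step ha0 hτ1 u
    have h1a : (0:ℝ) < 1 - a := by linarith
    refine ⟨u', vertWalkUp_cons hadj (by omega) hwalk, by push_cast; omega, ?_⟩
    have e : a ^ height u = a ^ height u' * a := by
      rw [show height u = height u' + 1 by omega, zpow_add_one₀ ha0.ne']
    have hd'' : dist (pt u) (pt u') < a ^ height u' := by rw [hh']; exact hd'
    have tri := dist_triangle (pt u') (pt u) (pt v)
    rw [dist_comm (pt u') (pt u)] at tri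
    have key : a ^ height u' + (a ^ height u' * a - a ^ height v) / (1 - a)
        = (a ^ height u' - a ^ height v) / (1 - a) := by field_simp; ring
    rw [e] at hd
    linarith

lemma walk_bound (ha0 : 0 < a) (ha1 : a < 1) (hτ0 : 0 < τ) :
    ∀ (k : ℕ) (f : ℕ → F.Vertex),
      (∀ i < k, Adj τ (f i) (f (i+1)) ∧ height (f (i+1)) = height (f i) + 1) →
      height (f k) = height (f 0) + k ∧
      dist (pt (f 0)) (pt (f k)) ≤ 2*τ*(a ^ height (f 0) - a ^ height (f k)) / (1 - a) := by
  intro k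
  induction k with
  | zero => intro f _; simp
  | succ k ih =>
    intro f hf
    obtain ⟨ihh, ihd⟩ := ih f (fun i hi => hf i (by omega))
    obtain ⟨hadj, hh⟩ := hf k (by omega)
    have h1a : (0:ℝ) < 1 - a := by linarith
    have hb : (0:ℝ) < a ^ height (f k) := zpow_pos ha0 _
    have e : a ^ height (f (k+1)) = a ^ height (f k) * a := by
      rw [hh, zpow_add_one₀ ha0.ne']
    have hedge := adj_dist hadj
    constructor
    · push_cast; omega
    · have tri := dist_triangle (pt (f 0)) (pt (f k)) (pt (f (k+1)))
      have key : 2*τ*(a ^ height (f 0) - a ^ height (f k) * a)/(1-a)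
          - 2*τ*(a ^ height (f 0) - a ^ height (f k))/(1-a) = 2*τ*a ^ height (f k) := by
        field_simp; ring
      rw [e] at hedge ⊢
      nlinarith [mul_pos (mul_pos hτ0 hb) h1a]

lemma vertWalkUp_le (ha0 : 0 < a) (ha1 : a < 1) (hτ0 : 0 < τ) {u v : F.Vertex}
    (h : VertWalkUp τ u v) :
    height u ≤ height v ∧ dist (pt u) (pt v) ≤ 2*τ*a ^ height u/(1-a) := by
  obtain ⟨k, f, h0, hk, hstep⟩ := h
  obtain ⟨hh, hd⟩ := walk_bound ha0 ha1 hτ0 k f hstep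
  rw [h0, hk] at hh hd
  have hb : (0:ℝ) < a ^ height v := zpow_pos ha0 _
  have h1a : (0:ℝ) < 1 - a := by linarith
  refine ⟨by omega, hd.trans ?_⟩
  rw [div_le_div_iff₀ h1a h1a]
  nlinarith [mul_pos (mul_pos hτ0 hb) h1a, zpow_pos ha0 (height u)]

lemma cone_exists (ha0 : 0 < a) (ha1 : a < 1) (hτa : 1/(1-a) < τ) (hτ1 : 1 ≤ τ)
    (v w : F.Vertex) (n : ℤ) (hnm : n ≤ min (height v) (height w))
    (hD : dist (pt v) (pt w) < (τ - 1/(1-a)) * a ^ n) :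
    ∃ u : F.Vertex, ConePoint τ u v w ∧ height u = n - 1 := by
  have h1a : (0:ℝ) < 1 - a := by linarith
  have hpos : ∀ m : ℤ, (0:ℝ) < a ^ m := fun m => zpow_pos ha0 m
  have hτ1a : 1 < τ * (1 - a) := by
    have := (div_lt_iff₀ h1a).mp hτa; linarith
  obtain ⟨u1, hw1, hh1, hd1⟩ := descend (F := F) ha0 ha1 hτ1 v (height v - n).toNat
  obtain ⟨u2, hw2, hh2, hd2⟩ := descend (F := F) ha0 ha1 hτ1 w (height w - n).toNat
  have hvn : ((height v - n).toNat : ℤ) = height v - n := Int.toNat_of_nonneg (by omega)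
  have hwn : ((height w - n).toNat : ℤ) = height w - n := Int.toNat_of_nonneg (by omega)
  rw [hvn] at hh1
  rw [hwn] at hh2
  have hh1' : height u1 = n := by omega
  have hh2' : height u2 = n := by omega
  rw [hh1'] at hd1
  rw [hh2'] at hd2
  -- key distance bounds
  have key1 : dist (pt u1) (pt v) < τ * a ^ n := by
    refine lt_of_le_of_lt hd1 ?_
    rw [div_lt_iff₀ h1a]
    nlinarith [hpos (height v), hpos n]
  have key2 : dist (pt u2) (pt w) < τ * a ^ n := by
    refine lt_of_le_of_lt hd2 ?_
    rw [div_lt_iff₀ h1a]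
    nlinarith [hpos (height w), hpos n]
  have key3 : dist (pt v) (pt u2) < τ * a ^ n := by
    have tri := dist_triangle (pt v) (pt w) (pt u2)
    rw [dist_comm (pt w) (pt u2)] at tri
    have h3 : (a ^ n - a ^ height w)/(1-a) ≤ (1/(1-a)) * a ^ n := by
      rw [div_le_iff₀ h1a]
      have e : 1/(1-a) * a ^ n * (1-a) = a ^ n := by field_simp
      nlinarith [hpos (height w)]
    have : dist (pt v) (pt u2) < (τ - 1/(1-a)) * a ^ n + (1/(1-a)) * a ^ n := by linarith
    calc dist (pt v) (pt u2) < (τ - 1/(1-a)) * a ^ n + (1/(1-a)) * a ^ n := this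
    _ = τ * a ^ n := by ring
  obtain ⟨s, hs, hds⟩ := F.maximal (n-1) (pt v)
  have hds' : dist (pt v) s < τ * a ^ (n-1) :=
    lt_of_lt_of_le hds (le_mul_of_one_le_left (hpos _).le hτ1)
  have hadj1 : Adj τ (⟨(s, n-1), hs⟩ : F.Vertex) u1 := by
    refine ⟨ne_of_height_ne ?_, ?_, pt v, hds', ?_⟩
    · show n - 1 ≠ height u1; omega
    · show |n - 1 - height u1| ≤ 1; rw [abs_le]; omega
    · rw [hh1', dist_comm]; exact key1
  have hadj2 : Adj τ (⟨(s, n-1), hs⟩ : F.Vertex) u2 := by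
    refine ⟨ne_of_height_ne ?_, ?_, pt v, hds', ?_⟩
    · show n - 1 ≠ height u2; omega
    · show |n - 1 - height u2| ≤ 1; rw [abs_le]; omega
    · rw [hh2']; exact key3
  refine ⟨⟨(s, n-1), hs⟩, ⟨?_, ?_, ?_⟩, rfl⟩
  · exact vertWalkUp_cons hadj1 (by show height u1 = n - 1 + 1; omega) hw1
  · exact vertWalkUp_cons hadj2 (by show height u2 = n - 1 + 1; omega) hw2
  · show n - 1 ≤ min (height v) (height w); omega

lemma vertWalkUp_joined {u v : F.Vertex} (h : VertWalkUp τ u v) : Joined τ u v := by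
  obtain ⟨k, f, h0, hk, hs⟩ := h
  exact ⟨k, f, h0, hk, fun i hi => (hs i hi).1⟩

lemma joined_snoc {u v w : F.Vertex} (h : Joined τ u v) (hadj : Adj τ v w) :
    Joined τ u w := by
  obtain ⟨k, f, h0, hk, hw⟩ := h
  refine ⟨k+1, fun i => if i ≤ k then f i else w, by simp [h0], by simp, ?_⟩
  intro i hi
  by_cases hik : i < k
  · simp only [if_pos (by omega : i ≤ k), if_pos (by omega : i + 1 ≤ k)]
    exact hw i hik
  · have hik' : i = k := by omega
    subst hik'
    simp only [if_pos le_rfl, if_neg (by omega : ¬ i + 1 ≤ i)]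
    rw [hk]; exact hadj

lemma joined_symm {v w : F.Vertex} (h : Joined τ v w) : Joined τ w v := by
  obtain ⟨k, f, h0, hk, hw⟩ := h
  refine ⟨k, fun i => f (k - i), by simp [hk], by simp [h0], ?_⟩
  intro i hi
  show Adj τ (f (k - i)) (f (k - (i+1)))
  rw [show k - i = (k - (i+1)) + 1 by omega]
  exact adj_symm (hw (k - (i+1)) (by omega))

lemma joined_trans {u v w : F.Vertex} (h1 : Joined τ u v) (h2 : Joined τ v w) :
    Joined τ u w := by
  obtain ⟨k, f, h0, hk, hw⟩ := h2
  have key : ∀ j, j ≤ k → Joined τ u (f j) := by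
    intro j
    induction j with
    | zero => intro _; rw [h0]; exact h1
    | succ j ih => intro hj; exact joined_snoc (ih (by omega)) (hw j (by omega))
  rw [← hk]; exact key k le_rfl

lemma exists_good_n (ha0 : 0 < a) (ha1 : a < 1) {δ D : ℝ} (hδ : 0 < δ) (hD : 0 ≤ D)
    (m : ℤ) :
    ∃ n : ℤ, (n ≤ m ∧ D < δ * a ^ n) ∧ ∀ z : ℤ, (z ≤ m ∧ D < δ * a ^ z) → z ≤ n := by
  apply Int.exists_greatest_of_bdd ⟨m, fun z hz => hz.1⟩
  obtain ⟨k, hk⟩ := pow_unbounded_of_one_lt (D/δ) ((one_lt_inv₀ ha0).mpr ha1)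
  have e : a ^ (-(k:ℤ)) = (a⁻¹) ^ k := by
    rw [inv_pow, ← zpow_natCast a k, ← zpow_neg]
  refine ⟨min m (-(k:ℤ)), min_le_left _ _, ?_⟩
  have hle : a ^ (-(k:ℤ)) ≤ a ^ (min m (-(k:ℤ))) :=
    zpow_le_zpow_right_of_le_one₀ ha0 ha1.le (min_le_right _ _)
  have hk' : D/δ < a ^ (min m (-(k:ℤ))) := lt_of_lt_of_le (by rw [e]; exact hk) hle
  rw [div_lt_iff₀ hδ] at hk'
  calc D < a ^ (min m (-(k:ℤ))) * δ := hk'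
  _ = δ * a ^ (min m (-(k:ℤ))) := mul_comm _ _

end Aux

open HypFilling

/-- Theorem: branch points exist for every pair of vertices, their heights satisfy a
two-sided comparison with `d(v,w) + a^{min(h(v),h(w))}`, and the filling graph is
connected. The comparison constant depends only on `a` and `τ`. -/
theorem statement15 (a τ : ℝ) (ha0 : 0 < a) (ha1 : a < 1)
    (hτ : max 3 (1 / (1 - a)) < τ) :
    ∃ C : ℝ, 1 ≤ C ∧
      ∀ (Z : Type) [MetricSpace Z] (F : HypFilling Z a),
        (∀ v w : F.Vertex,
          (∃ u : F.Vertex, HypFilling.BranchPoint τ u v w) ∧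
          ∀ u : F.Vertex, HypFilling.BranchPoint τ u v w →
            C⁻¹ * (dist (HypFilling.pt v) (HypFilling.pt w) +
                a ^ min (HypFilling.height v) (HypFilling.height w)) ≤
              a ^ HypFilling.height u ∧
            a ^ HypFilling.height u ≤
              C * (dist (HypFilling.pt v) (HypFilling.pt w) +
                a ^ min (HypFilling.height v) (HypFilling.height w))) ∧
        (∀ v w : F.Vertex, HypFilling.Joined τ v w) := by
  have h1a : (0:ℝ) < 1 - a := by linarith
  have hτ3 : (3:ℝ) < τ := lt_of_le_of_lt (le_max_left _ _) hτ
  have hτa : 1/(1-a) < τ := lt_of_le_of_lt (le_max_right _ _) hτ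
  have hτ0 : (0:ℝ) < τ := by linarith
  have hτ1 : (1:ℝ) ≤ τ := by linarith
  have hδ : 0 < τ - 1/(1-a) := by linarith
  set C : ℝ := max (max (1/a) (1/((τ - 1/(1-a))*a^2))) (4*τ/(1-a) + 1) with hCdef
  have hC1 : 1 ≤ C := by
    refine le_trans ?_ (le_max_right _ _)
    have : 0 ≤ 4*τ/(1-a) := by positivity
    linarith
  have hC0 : (0:ℝ) < C := by linarith
  refine ⟨C, hC1, ?_⟩
  intro Z _ F
  constructor
  · intro v w
    obtain ⟨n, ⟨hnm, hDn⟩, hmax⟩ :=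
      exists_good_n ha0 ha1 hδ (dist_nonneg (x := pt v) (y := pt w))
        (min (height v) (height w))
    obtain ⟨u₀, hu₀, hu₀h⟩ := cone_exists ha0 ha1 hτa hτ1 v w n hnm hDn
    constructor
    · -- branch point existence
      obtain ⟨k₀, ⟨ub, hubc, hubh⟩, hk₀max⟩ :=
        Int.exists_greatest_of_bdd
          (P := fun k => ∃ u : F.Vertex, ConePoint τ u v w ∧ height u = k)
          ⟨min (height v) (height w), fun z ⟨u, hu, hh⟩ => hh ▸ hu.2.2⟩
          ⟨n - 1, u₀, hu₀, hu₀h⟩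
      refine ⟨ub, hubc, fun u' hc => ?_⟩
      rw [hubh]; exact hk₀max (height u') ⟨u', hc, rfl⟩
    · -- estimates
      intro u hu
      obtain ⟨⟨hwv, hww, hum⟩, humax⟩ := hu
      have hlowv := (vertWalkUp_le ha0 ha1 hτ0 hwv).2
      have hloww := (vertWalkUp_le ha0 ha1 hτ0 hww).2
      have hau : (0:ℝ) < a ^ height u := zpow_pos ha0 _
      have ham' : (0:ℝ) < a ^ min (height v) (height w) := zpow_pos ha0 _
      have hDle : dist (pt v) (pt w) ≤ 4*τ*a^(height u)/(1-a) := by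
        have tri := dist_triangle (pt v) (pt u) (pt w)
        rw [dist_comm (pt v) (pt u)] at tri
        have e : 2*τ*a^(height u)/(1-a) + 2*τ*a^(height u)/(1-a)
            = 4*τ*a^(height u)/(1-a) := by ring
        linarith
      have ham : a ^ min (height v) (height w) ≤ a ^ height u :=
        zpow_le_zpow_right_of_le_one₀ ha0 ha1.le hum
      constructor
      · rw [inv_mul_le_iff₀ hC0]
        have hCge : 4*τ/(1-a) + 1 ≤ C := le_max_right _ _
        have e2 : (4*τ/(1-a)+1)*a^(height u) = 4*τ*a^(height u)/(1-a) + a^(height u) := by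
          ring
        have := mul_le_mul_of_nonneg_right hCge hau.le
        linarith
      · have hun : n - 1 ≤ height u := by rw [← hu₀h]; exact humax u₀ hu₀
        have h1 : a ^ height u ≤ a ^ (n-1) :=
          zpow_le_zpow_right_of_le_one₀ ha0 ha1.le hun
        have hDpos : (0:ℝ) ≤ dist (pt v) (pt w) := dist_nonneg
        refine le_trans h1 ?_
        rcases lt_or_eq_of_le hnm with hnm' | hnm'
        · -- n < min heights, so δ a^{n+1} ≤ D
          have hge : (τ - 1/(1-a)) * a ^ (n+1) ≤ dist (pt v) (pt w) := by
            by_contra hlt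
            push_neg at hlt
            have := hmax (n+1) ⟨by omega, hlt⟩
            omega
          have e : a ^ (n+1) = a ^ (n-1) * (a*a) := by
            rw [show n+1 = (n-1)+1+1 by ring, zpow_add_one₀ ha0.ne',
              zpow_add_one₀ ha0.ne']
            ring
          rw [e] at hge
          have hC2 : 1/((τ - 1/(1-a))*a^2) ≤ C :=
            le_trans (le_max_right _ _) (le_max_left _ _)
          have hpos2 : (0:ℝ) < (τ - 1/(1-a))*a^2 := by positivity
          have h3 : a^(n-1) ≤ (1/((τ - 1/(1-a))*a^2)) * dist (pt v) (pt w) := by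
            rw [show (1/((τ - 1/(1-a))*a^2)) * dist (pt v) (pt w)
                = dist (pt v) (pt w) / ((τ - 1/(1-a))*a^2) by ring,
              le_div_iff₀ hpos2, pow_two]
            nlinarith [hge]
          have h4 : (1/((τ - 1/(1-a))*a^2)) * dist (pt v) (pt w)
              ≤ C * dist (pt v) (pt w) := mul_le_mul_of_nonneg_right hC2 hDpos
          nlinarith [mul_pos hC0 ham']
        · -- n = min heights
          have hC3 : 1/a ≤ C := le_trans (le_max_left _ _) (le_max_left _ _)
          have e : a ^ (n-1) * a = a ^ min (height v) (height w) := by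
            rw [← zpow_add_one₀ ha0.ne', show n - 1 + 1 = n by ring, hnm']
          have h5 : a ^ (n-1) = (1/a) * a ^ min (height v) (height w) := by
            rw [← e]; field_simp
          rw [h5]
          have h6 : (1/a) * a ^ min (height v) (height w)
              ≤ C * a ^ min (height v) (height w) :=
            mul_le_mul_of_nonneg_right hC3 ham'.le
          nlinarith [mul_pos hC0 (lt_of_lt_of_le (by positivity : (0:ℝ) < 0 + 1) (by linarith : (0:ℝ) + 1 ≤ dist (pt v) (pt w) + 1))]
  · intro v w
    obtain ⟨n, ⟨hnm, hDn⟩, -⟩ :=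
      exists_good_n ha0 ha1 hδ (dist_nonneg (x := pt v) (y := pt w))
        (min (height v) (height w))
    obtain ⟨u₀, ⟨hwv, hww, -⟩, -⟩ := cone_exists ha0 ha1 hτa hτ1 v w n hnm hDn
    exact joined_trans (joined_symm (vertWalkUp_joined hwv)) (vertWalkUp_joined hww)
end
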